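/- arXiv:2411.17127 — 10 statements merged into one kernel-verified Lean document; each statement's English description precedes it below -/
import Mathlib

section
/- Let n ≥ 1 and let T be any subset of {2,…,n}. The number of permutations σ of {1,…,n} whose set of left-to-right minimum positions is exactly {1} ∪ T equals (n−1)! / ∏_{j∈T} (j−1). -/
open Finset Equiv

section Aux
variable {n : ℕ}

private def pcode (σ : Equiv.Perm (Fin n)) (i : Fin n) : ℕ :=
  (Finset.univ.filter fun j => j < i ∧ σ j < σ i).card

private lemma filter_perm_card (σ : Equiv.Perm (Fin n)) (p : Fin n → Prop) [DecidablePred p] :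
    (Finset.univ.filter fun j => p (σ j)).card = (Finset.univ.filter p).card := by
  rw [show (Finset.univ.filter fun j => p (σ j)) =
      (Finset.univ.filter p).map σ.symm.toEmbedding by
    ext j
    simp only [Finset.mem_filter, Finset.mem_univ, true_and, Finset.mem_map,
      Equiv.coe_toEmbedding]
    constructor
    · intro h; exact ⟨σ j, h, σ.symm_apply_apply j⟩
    · rintro ⟨x, hx, rfl⟩; simpa using hx]
  exact Finset.card_map _

private lemma pcode_val (σ : Equiv.Perm (Fin n)) (i : Fin n) :
    (σ i : ℕ) = pcode σ i + (Finset.univ.filter fun j => i < j ∧ σ j < σ i).card := by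
  have hC : (Finset.univ.filter fun j => σ j < σ i).card = (σ i : ℕ) := by
    rw [filter_perm_card σ (fun x => x < σ i)]
    rw [show Finset.univ.filter (fun x : Fin n => x < σ i) = Finset.Iio (σ i) by
      ext x; simp]
    exact Fin.card_Iio _
  have hsplit : (Finset.univ.filter fun j => σ j < σ i) =
      (Finset.univ.filter fun j => j < i ∧ σ j < σ i) ∪
      (Finset.univ.filter fun j => i < j ∧ σ j < σ i) := by
    ext j
    simp only [Finset.mem_filter, Finset.mem_univ, true_and, Finset.mem_union]
    constructor
    · intro h
      have hne : j ≠ i := by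
        rintro rfl; exact absurd h (lt_irrefl _)
      rcases lt_or_gt_of_ne hne with h' | h'
      · exact Or.inl ⟨h', h⟩
      · exact Or.inr ⟨h', h⟩
    · rintro (⟨_, h⟩ | ⟨_, h⟩) <;> exact h
  have hdisj : Disjoint (Finset.univ.filter fun j => j < i ∧ σ j < σ i)
      (Finset.univ.filter fun j => i < j ∧ σ j < σ i) := by
    rw [Finset.disjoint_left]
    intro j hj hj'
    simp only [Finset.mem_filter] at hj hj'
    exact absurd (hj.2.1.trans hj'.2.1) (lt_irrefl _)
  rw [← hC, hsplit, Finset.card_union_of_disjoint hdisj]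
  rfl

private lemma pcode_inj_aux (σ τ : Equiv.Perm (Fin n)) (h : ∀ i, pcode σ i = pcode τ i)
    (i : Fin n) (hlt : σ i < τ i) (hab : ∀ j, i < j → σ j = τ j) : False := by
  set A := Finset.univ.filter fun j => i < j ∧ σ j < σ i with hA
  set B := Finset.univ.filter fun j => i < j ∧ σ j < τ i with hB
  have hBeq : (Finset.univ.filter fun j => i < j ∧ τ j < τ i) = B := by
    ext j
    simp only [hB, Finset.mem_filter, Finset.mem_univ, true_and]
    constructor
    · rintro ⟨hj, h2⟩; rw [← hab j hj] at h2; exact ⟨hj, h2⟩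
    · rintro ⟨hj, h2⟩; rw [hab j hj] at h2; exact ⟨hj, h2⟩
  have hσ : (σ i : ℕ) = pcode σ i + A.card := pcode_val σ i
  have hτ : (τ i : ℕ) = pcode σ i + B.card := by
    rw [h i]; rw [pcode_val τ i, hBeq]
  have hAB : A ⊆ B := by
    intro j hj
    simp only [hA, hB, Finset.mem_filter, Finset.mem_univ, true_and] at hj ⊢
    exact ⟨hj.1, hj.2.trans hlt⟩
  set W := Finset.univ.filter fun j => σ i ≤ σ j ∧ σ j < τ i with hW
  have hWcard : W.card = (τ i : ℕ) - (σ i : ℕ) := by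
    rw [hW, filter_perm_card σ (fun x => σ i ≤ x ∧ x < τ i)]
    rw [show Finset.univ.filter (fun x : Fin n => σ i ≤ x ∧ x < τ i) = Finset.Ico (σ i) (τ i) by
      ext x; simp [Finset.mem_Ico]]
    exact Fin.card_Ico _ _
  have hiW : i ∈ W := by
    simp only [hW, Finset.mem_filter, Finset.mem_univ, true_and]
    exact ⟨le_refl _, hlt⟩
  have hsub : B \ A ⊆ W.erase i := by
    intro j hj
    simp only [hA, hB, Finset.mem_sdiff, Finset.mem_filter, Finset.mem_univ, true_and,
      not_and] at hj
    rcases hj with ⟨⟨hij, hjτ⟩, hnot⟩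
    have hge : σ i ≤ σ j := not_lt.mp (fun hc => hnot hij hc)
    refine Finset.mem_erase.mpr ⟨(ne_of_gt hij), ?_⟩
    simp only [hW, Finset.mem_filter, Finset.mem_univ, true_and]
    exact ⟨hge, hjτ⟩
  have h1 : B.card - A.card ≤ W.card - 1 := by
    calc B.card - A.card = (B \ A).card := (Finset.card_sdiff_of_subset hAB).symm
    _ ≤ (W.erase i).card := Finset.card_le_card hsub
    _ = W.card - 1 := Finset.card_erase_of_mem hiW
  have h2 : A.card ≤ B.card := Finset.card_le_card hAB
  have hlt' : (σ i : ℕ) < (τ i : ℕ) := hlt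
  omega

private lemma pcode_injective : Function.Injective (pcode (n := n)) := by
  intro σ τ h
  by_contra hne
  have hex : ∃ i, σ i ≠ τ i := by
    by_contra hc
    push_neg at hc
    exact hne (Equiv.ext hc)
  have hD : (Finset.univ.filter fun i => σ i ≠ τ i).Nonempty := by
    obtain ⟨i, hi⟩ := hex
    exact ⟨i, by simp [hi]⟩
  set i := (Finset.univ.filter fun i => σ i ≠ τ i).max' hD with hidef
  have hi : σ i ≠ τ i := by
    have := Finset.max'_mem _ hD
    simpa using this
  have hab : ∀ j, i < j → σ j = τ j := by
    intro j hj
    by_contra hc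
    have hjD : j ∈ Finset.univ.filter fun i => σ i ≠ τ i := by simp [hc]
    exact absurd (Finset.le_max' _ j hjD) (not_le.mpr hj)
  have hfun : ∀ i, pcode σ i = pcode τ i := fun i => congrFun h i
  rcases lt_trichotomy (σ i) (τ i) with hlt | heq | hgt
  · exact pcode_inj_aux σ τ hfun i hlt hab
  · exact hi heq
  · exact pcode_inj_aux τ σ (fun i => (hfun i).symm) i hgt (fun j hj => (hab j hj).symm)

private lemma pcode_le (σ : Equiv.Perm (Fin n)) (i : Fin n) : pcode σ i ≤ (i : ℕ) := by
  have : (Finset.univ.filter fun j => j < i ∧ σ j < σ i) ⊆ Finset.Iio i := by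
    intro j hj
    simp only [Finset.mem_filter] at hj
    simpa using hj.2.1
  calc pcode σ i ≤ (Finset.Iio i).card := Finset.card_le_card this
  _ = (i : ℕ) := Fin.card_Iio _

private def pcodeFin (σ : Equiv.Perm (Fin n)) : ∀ i : Fin n, Fin ((i : ℕ) + 1) :=
  fun i => ⟨pcode σ i, Nat.lt_succ_of_le (pcode_le σ i)⟩

private lemma pcodeFin_bijective : Function.Bijective (pcodeFin (n := n)) := by
  rw [Fintype.bijective_iff_injective_and_card]
  constructor
  · intro σ τ h
    exact pcode_injective (funext fun i => congrArg Fin.val (congrFun h i))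
  · rw [Fintype.card_perm, Fintype.card_fin, Fintype.card_pi]
    simp only [Fintype.card_fin]
    rw [Fin.prod_univ_eq_prod_range (fun i => i + 1) n]
    exact (Finset.prod_range_add_one_eq_factorial n).symm

private lemma record_iff_pcode_zero (σ : Equiv.Perm (Fin n)) (i : Fin n) :
    (∀ j : Fin n, j < i → σ i < σ j) ↔ pcode σ i = 0 := by
  rw [pcode, Finset.card_eq_zero, Finset.filter_eq_empty_iff]
  constructor
  · rintro h j - ⟨hji, hσ⟩
    exact absurd (h j hji) (not_lt.mpr hσ.le)
  · intro h j hji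
    have h1 : ¬ σ j < σ i := fun hc => h (Finset.mem_univ j) ⟨hji, hc⟩
    have h2 : σ j ≠ σ i := fun hc => (ne_of_lt hji) (σ.injective hc)
    exact lt_of_le_of_ne (not_lt.mp h1) (Ne.symm h2)

private lemma cond_iff (hn : 1 ≤ n) (T : Finset ℕ) (hT : T ⊆ Finset.Icc 2 n)
    (σ : Equiv.Perm (Fin n)) :
    ((Finset.univ.filter (fun i : Fin n => ∀ j : Fin n, j < i → σ i < σ j)).image
        (fun i : Fin n => (i : ℕ) + 1) = insert 1 T)
    ↔ ∀ i : Fin n, (pcode σ i = 0 ↔ ((i : ℕ) = 0 ∨ (i : ℕ) + 1 ∈ T)) := by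
  constructor
  · intro h i
    rw [← record_iff_pcode_zero]
    have h1 : (∀ j : Fin n, j < i → σ i < σ j) ↔ (i : ℕ) + 1 ∈
        (Finset.univ.filter (fun i : Fin n => ∀ j : Fin n, j < i → σ i < σ j)).image
          (fun i : Fin n => (i : ℕ) + 1) := by
      constructor
      · intro hr
        exact Finset.mem_image.mpr ⟨i, Finset.mem_filter.mpr ⟨Finset.mem_univ i, hr⟩, rfl⟩
      · intro hm
        obtain ⟨i', hi', he⟩ := Finset.mem_image.mp hm
        have : i' = i := Fin.ext (by omega)
        subst this
        exact (Finset.mem_filter.mp hi').2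
    rw [h1, h, Finset.mem_insert]
    constructor
    · rintro (h' | h')
      · exact Or.inl (by omega)
      · exact Or.inr h'
    · rintro (h' | h')
      · exact Or.inl (by omega)
      · exact Or.inr h'
  · intro h
    ext m
    rw [Finset.mem_insert]
    constructor
    · intro hm
      obtain ⟨i, hi, rfl⟩ := Finset.mem_image.mp hm
      have hrec := (Finset.mem_filter.mp hi).2
      rcases (h i).mp ((record_iff_pcode_zero σ i).mp hrec) with h' | h'
      · exact Or.inl (by omega)
      · exact Or.inr h'
    · intro hm
      have hmn : 1 ≤ m ∧ m ≤ n := by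
        rcases hm with rfl | hm
        · exact ⟨le_refl _, hn⟩
        · have := Finset.mem_Icc.mp (hT hm)
          omega
      set i : Fin n := ⟨m - 1, by omega⟩ with hidef
      have hi1 : (i : ℕ) + 1 = m := by simp [hidef]; omega
      have hrec : pcode σ i = 0 := by
        rw [h i]
        rcases hm with rfl | hm
        · exact Or.inl (by simp [hidef])
        · right; rw [hi1]; exact hm
      exact Finset.mem_image.mpr ⟨i, by
        simp only [Finset.mem_filter, Finset.mem_univ, true_and]
        exact (record_iff_pcode_zero σ i).mpr hrec, hi1⟩

private lemma card_fin_zero_iff (k : ℕ) (c : Prop) [Decidable c] :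
    Nat.card {x : Fin (k + 1) // (x : ℕ) = 0 ↔ c} = if c then 1 else k := by
  have hone : Fintype.card {x : Fin (k + 1) // (x : ℕ) = 0} = 1 := by
    rw [Fintype.card_eq_one_iff]
    refine ⟨⟨0, by simp⟩, ?_⟩
    rintro ⟨x, hx⟩
    exact Subtype.ext (Fin.ext (by simp [hx]))
  rw [Nat.card_eq_fintype_card]
  by_cases hc : c
  · have he : {x : Fin (k + 1) // (x : ℕ) = 0 ↔ c} ≃ {x : Fin (k + 1) // (x : ℕ) = 0} :=
      Equiv.subtypeEquivRight (fun x => by simp [hc])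
    rw [Fintype.card_congr he, hone, if_pos hc]
  · have he : {x : Fin (k + 1) // (x : ℕ) = 0 ↔ c} ≃ {x : Fin (k + 1) // ¬ (x : ℕ) = 0} :=
      Equiv.subtypeEquivRight (fun x => by simp [hc])
    rw [Fintype.card_congr he, Fintype.card_subtype_compl, hone, Fintype.card_fin, if_neg hc]
    omega

end Aux

theorem stmt0 (n : ℕ) (hn : 1 ≤ n) (T : Finset ℕ) (hT : T ⊆ Finset.Icc 2 n) :
    (Nat.card {σ : Equiv.Perm (Fin n) //
        (Finset.univ.filter (fun i : Fin n => ∀ j : Fin n, j < i → σ i < σ j)).image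
            (fun i : Fin n => (i : ℕ) + 1)
          = insert 1 T} : ℚ)
      = ((n - 1).factorial : ℚ) / ∏ j ∈ T, ((j : ℚ) - 1) := by
  -- Step 1: compute the Nat.card as a product
  have hcard : Nat.card {σ : Equiv.Perm (Fin n) //
        (Finset.univ.filter (fun i : Fin n => ∀ j : Fin n, j < i → σ i < σ j)).image
            (fun i : Fin n => (i : ℕ) + 1)
          = insert 1 T}
      = ∏ i : Fin n, (if ((i : ℕ) = 0 ∨ (i : ℕ) + 1 ∈ T) then 1 else (i : ℕ)) := by
    have e1 := Equiv.subtypeEquivRight (fun σ => cond_iff hn T hT σ)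
    have e2 : {σ : Equiv.Perm (Fin n) //
          ∀ i : Fin n, (pcode σ i = 0 ↔ ((i : ℕ) = 0 ∨ (i : ℕ) + 1 ∈ T))} ≃
        {f : ∀ i : Fin n, Fin ((i : ℕ) + 1) //
          ∀ i : Fin n, ((f i : ℕ) = 0 ↔ ((i : ℕ) = 0 ∨ (i : ℕ) + 1 ∈ T))} :=
      (Equiv.ofBijective _ pcodeFin_bijective).subtypeEquiv (fun σ => Iff.rfl)
    have e3 := Equiv.subtypePiEquivPi
      (p := fun (i : Fin n) (x : Fin ((i : ℕ) + 1)) =>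
        ((x : ℕ) = 0 ↔ ((i : ℕ) = 0 ∨ (i : ℕ) + 1 ∈ T)))
    rw [Nat.card_congr ((e1.trans e2).trans e3), Nat.card_pi]
    exact Finset.prod_congr rfl (fun i _ => card_fin_zero_iff (i : ℕ) _)
  rw [hcard]
  -- Step 2: ℕ product identity
  have hgf : ∀ i : ℕ, (if (i + 1 = 1 ∨ i + 1 ∈ T) then 1 else (i + 1) - 1)
      = (if (i = 0 ∨ i + 1 ∈ T) then 1 else i) := by
    intro i
    exact if_congr (or_congr (by omega) Iff.rfl) rfl (by omega)
  have hP2 : (∏ i : Fin n, (if ((i : ℕ) = 0 ∨ (i : ℕ) + 1 ∈ T) then 1 else (i : ℕ)))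
      = ∏ j ∈ Finset.Ico 1 (n + 1), (if (j = 1 ∨ j ∈ T) then 1 else j - 1) := by
    rw [Fin.prod_univ_eq_prod_range (fun i => if (i = 0 ∨ i + 1 ∈ T) then 1 else i) n]
    rw [Finset.prod_Ico_eq_prod_range]
    simp only [Nat.add_sub_cancel]
    refine Finset.prod_congr rfl (fun i _ => ?_)
    rw [add_comm 1 i]
    exact (hgf i).symm
  have hP3 : (∏ j ∈ Finset.Ico 1 (n + 1), (if (j = 1 ∨ j ∈ T) then 1 else j - 1))
      = ∏ j ∈ Finset.Icc 2 n, (if (j = 1 ∨ j ∈ T) then 1 else j - 1) := by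
    rw [Finset.prod_eq_prod_Ico_succ_bot (by omega : 1 < n + 1)]
    rw [if_pos (Or.inl rfl), one_mul, Finset.Ico_add_one_right_eq_Icc]
  have hP4 : (∏ j ∈ Finset.Icc 2 n, (if (j = 1 ∨ j ∈ T) then 1 else j - 1))
      = ∏ j ∈ Finset.Icc 2 n \ T, (j - 1) := by
    rw [show (∏ j ∈ Finset.Icc 2 n, (if (j = 1 ∨ j ∈ T) then 1 else j - 1))
        = ∏ j ∈ Finset.Icc 2 n, (if j ∈ T then 1 else j - 1) from
      Finset.prod_congr rfl (fun j hj => if_congr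
        (or_iff_right (by have := Finset.mem_Icc.mp hj; omega)) rfl rfl)]
    rw [Finset.prod_ite, Finset.prod_const_one, one_mul]
    congr 1
    rw [← Finset.sdiff_eq_filter]
  have hP7 : (∏ j ∈ Finset.Icc 2 n, (j - 1)) = (n - 1).factorial := by
    rw [← Finset.Ico_add_one_right_eq_Icc, Finset.prod_Ico_eq_prod_range]
    rw [show n + 1 - 2 = n - 1 by omega]
    rw [← Finset.prod_range_add_one_eq_factorial (n - 1)]
    exact Finset.prod_congr rfl (fun i _ => by omega)
  have hmain : (∏ i : Fin n, (if ((i : ℕ) = 0 ∨ (i : ℕ) + 1 ∈ T) then 1 else (i : ℕ)))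
      * (∏ j ∈ T, (j - 1)) = (n - 1).factorial := by
    rw [hP2, hP3, hP4, ← hP7]
    exact Finset.prod_sdiff hT
  -- Step 3: conclude over ℚ
  have hTcast : (∏ j ∈ T, ((j : ℚ) - 1)) = ((∏ j ∈ T, (j - 1) : ℕ) : ℚ) := by
    rw [Nat.cast_prod]
    refine Finset.prod_congr rfl (fun j hj => ?_)
    have h2 : 2 ≤ j := (Finset.mem_Icc.mp (hT hj)).1
    rw [Nat.cast_sub (by omega : 1 ≤ j), Nat.cast_one]
  have hne : ((∏ j ∈ T, (j - 1) : ℕ) : ℚ) ≠ 0 := by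
    rw [Nat.cast_ne_zero]
    rw [Finset.prod_ne_zero_iff]
    intro j hj
    have h2 : 2 ≤ j := (Finset.mem_Icc.mp (hT hj)).1
    omega
  rw [hTcast, eq_div_iff hne]
  exact_mod_cast hmain
end

section
/- Let k ≥ 1, n ≥ 1 and C = (c_0,…,c_k) ∈ {0,1}^{k+1}. For a k-tuple (σ_1,…,σ_k) of permutations of {1,…,n} and α ∈ {1,…,n}, let l_α = #{β ∈ {1,…,k} : α is a left-to-right minimum of σ_β} (note l_1 = k). Then for every integer m ≥ 0, the number of k-tuples (σ_1,…,σ_k) of permutations of {1,…,n} with #{α ∈ {1,…,n} : c_{l_α} = 1} = m equals O_C(n, m), i.e. it equals (n−1)!^k · ∑_{S ⊆ {2,…,n}, |S| = m'−1} (∏_{j∈S} F_j(C)) · (∏_{j∈{2,…,n}∖S} F_j(C')) where m' = m − c_k + 1, if 1 ≤ m' ≤ n, and equals 0 otherwise. -/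
/-- `F j C = ∑_{β=0}^{k} C(k,β) · c_β / (j−1)^β`. -/
def F (k : ℕ) (C : ℕ → ℕ) (j : ℕ) : ℚ :=
  ∑ β ∈ Finset.range (k + 1), (k.choose β : ℚ) * (C β : ℚ) / ((j : ℚ) - 1) ^ β

/-- The unsigned `C` sequential optimization numbers `O^u_C(n, m)`. -/
def Ou (k : ℕ) (C : ℕ → ℕ) (n : ℕ) (m : ℤ) : ℚ :=
  if 1 ≤ m ∧ m ≤ (n : ℤ) then
    ((n - 1).factorial : ℚ) ^ k *
      ∑ S ∈ (Finset.Icc 2 n).powersetCard (m.toNat - 1),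
        (∏ j ∈ S, F k C j) * ∏ j ∈ Finset.Icc 2 n \ S, F k (fun β => 1 - C β) j
  else 0

/-- The `C` sequential optimization numbers `O_C(n, m) = O^u_C(n, m − c_k + 1)`. -/
def Oc (k : ℕ) (C : ℕ → ℕ) (n : ℕ) (m : ℤ) : ℚ :=
  Ou k C n (m - C k + 1)



section AuxA
open Finset Equiv


def prof {n : ℕ} (σ : Equiv.Perm (Fin n)) : Fin n → Bool :=
  fun α => decide (∀ j : Fin n, j < α → σ α < σ j)

def ext1 {n : ℕ} (p : Fin (n+1)) (e : Equiv.Perm (Fin n)) : Equiv.Perm (Fin (n+1)) :=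
  (finSuccEquiv' (Fin.last n)).trans ((e.optionCongr).trans (finSuccEquiv' p).symm)

lemma ext1_last {n : ℕ} (p : Fin (n+1)) (e : Equiv.Perm (Fin n)) :
    ext1 p e (Fin.last n) = p := by
  simp [ext1, finSuccEquiv'_at, finSuccEquiv'_symm_none]

lemma ext1_castSucc {n : ℕ} (p : Fin (n+1)) (e : Equiv.Perm (Fin n)) (i : Fin n) :
    ext1 p e (Fin.castSucc i) = p.succAbove (e i) := by
  have h : finSuccEquiv' (Fin.last n) (Fin.castSucc i) = some i := by
    rw [← Fin.succAbove_last, finSuccEquiv'_succAbove]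
  simp [ext1, h, finSuccEquiv'_symm_some]

lemma ext1_bij {n : ℕ} : Function.Bijective
    (fun pe : Fin (n+1) × Equiv.Perm (Fin n) => ext1 pe.1 pe.2) := by
  rw [Fintype.bijective_iff_injective_and_card]
  constructor
  · rintro ⟨p, e⟩ ⟨q, f⟩ h
    have hp : p = q := by
      have := congrArg (fun σ : Equiv.Perm (Fin (n+1)) => σ (Fin.last n)) h
      simpa [ext1_last] using this
    subst hp
    have he : e = f := by
      ext i : 2
      have := congrArg (fun σ : Equiv.Perm (Fin (n+1)) => σ (Fin.castSucc i)) h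
      simp only [ext1_castSucc] at this
      exact congrArg Fin.val (Fin.succAbove_right_injective this)
    simp [he]
  · simp [Fintype.card_perm, Nat.factorial_succ]

lemma prof_ext1_last {n : ℕ} (p : Fin (n+1)) (e : Equiv.Perm (Fin n)) :
    prof (ext1 p e) (Fin.last n) = decide (p = 0) := by
  unfold prof
  rw [decide_eq_decide]
  constructor
  · intro h
    by_contra hp
    have h0 : (0 : Fin (n+1)) < p := Fin.pos_of_ne_zero hp
    obtain ⟨j, hj⟩ := (ext1 p e).surjective 0
    have hjne : j ≠ Fin.last n := by
      intro hl; rw [hl, ext1_last] at hj; exact hp hj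
    have hjlt : j < Fin.last n := Fin.lt_last_iff_ne_last.mpr hjne
    have := h j hjlt
    rw [ext1_last, hj] at this
    exact absurd this (Fin.not_lt.mpr (Fin.zero_le p))
  · intro hp j hj
    subst hp
    rw [ext1_last]
    have : ext1 0 e j ≠ 0 := fun hc =>
      (Fin.lt_last_iff_ne_last.mp hj) ((ext1 0 e).injective (hc.trans (ext1_last 0 e).symm))
    exact Fin.pos_of_ne_zero this

lemma prof_ext1_castSucc {n : ℕ} (p : Fin (n+1)) (e : Equiv.Perm (Fin n)) (i : Fin n) :
    prof (ext1 p e) (Fin.castSucc i) = prof e i := by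
  unfold prof
  rw [decide_eq_decide]
  constructor
  · intro h j hj
    have := h (Fin.castSucc j) (by simpa using hj)
    rw [ext1_castSucc, ext1_castSucc] at this
    exact (Fin.succAbove_lt_succAbove_iff (p := p)).mp this
  · intro h j hj
    have hjlt : j < Fin.last n := lt_of_lt_of_le hj (Fin.le_last _)
    obtain ⟨j', hj'⟩ : ∃ j', j = Fin.castSucc j' := by
      exact ⟨⟨j.val, by omega⟩, by ext; simp⟩
    subst hj'
    rw [ext1_castSucc, ext1_castSucc]
    exact (Fin.succAbove_lt_succAbove_iff (p := p)).mpr (h j' (by simpa using hj))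

lemma prof_ext1_eq_iff {n : ℕ} (p : Fin (n+1)) (e : Equiv.Perm (Fin n)) (t : Fin (n+1) → Bool) :
    prof (ext1 p e) = t ↔
      (decide (p = 0) = t (Fin.last n) ∧ prof e = fun i => t (Fin.castSucc i)) := by
  constructor
  · intro h
    refine ⟨?_, funext fun i => ?_⟩
    · rw [← congrFun h (Fin.last n), prof_ext1_last]
    · rw [← congrFun h (Fin.castSucc i), prof_ext1_castSucc]
  · rintro ⟨h1, h2⟩
    funext α
    induction α using Fin.lastCases with
    | last => rw [prof_ext1_last, h1]
    | cast i => rw [prof_ext1_castSucc, h2]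

lemma prof_count : ∀ (n : ℕ) (t : Fin n → Bool),
    (Finset.univ.filter (fun σ : Equiv.Perm (Fin n) => prof σ = t)).card
      = ∏ α : Fin n, (if t α then 1 else (α : ℕ)) := by
  intro n
  induction n with
  | zero =>
    intro t
    rw [Finset.filter_true_of_mem (fun σ _ => Subsingleton.elim _ _)]
    simp
  | succ n ih =>
    intro t
    have hcard : (Finset.univ.filter (fun σ : Equiv.Perm (Fin (n+1)) => prof σ = t)).card
        = (Finset.univ.filter (fun pe : Fin (n+1) × Equiv.Perm (Fin n) =>
            prof (ext1 pe.1 pe.2) = t)).card := by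
      symm
      apply Finset.card_bij (fun pe _ => ext1 pe.1 pe.2)
      · intro pe hpe
        simp only [Finset.mem_filter, Finset.mem_univ, true_and] at hpe ⊢
        exact hpe
      · intro a ha b hb hab
        exact ext1_bij.injective hab
      · intro b hb
        obtain ⟨pe, hpe⟩ := ext1_bij.surjective b
        refine ⟨pe, ?_, hpe⟩
        simp only [Finset.mem_filter, Finset.mem_univ, true_and] at hb ⊢
        rw [show ext1 pe.1 pe.2 = b from hpe]; exact hb
    rw [hcard]
    have hfilter : (Finset.univ.filter (fun pe : Fin (n+1) × Equiv.Perm (Fin n) =>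
            prof (ext1 pe.1 pe.2) = t))
        = (Finset.univ.filter (fun p : Fin (n+1) => decide (p = 0) = t (Fin.last n))) ×ˢ
          (Finset.univ.filter (fun e : Equiv.Perm (Fin n) => prof e = fun i => t (Fin.castSucc i))) := by
      ext pe
      simp only [Finset.mem_filter, Finset.mem_product, Finset.mem_univ, true_and]
      exact prof_ext1_eq_iff pe.1 pe.2 t
    rw [hfilter, Finset.card_product, ih, Fin.prod_univ_castSucc]
    have h1 : (Finset.univ.filter (fun p : Fin (n+1) => decide (p = 0) = t (Fin.last n))).card
        = if t (Fin.last n) then 1 else (n : ℕ) := by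
      rcases ht : t (Fin.last n) with _ | _
      · simp only [ht, decide_eq_false_iff_not, if_false]
        rw [show (Finset.univ.filter (fun p : Fin (n+1) => ¬ p = 0)) = Finset.univ.erase 0 by
          ext x; simp [Finset.mem_erase, and_comm]]
        simp
      · simp only [ht, decide_eq_true_eq, if_true]
        rw [Finset.filter_eq']
        simp
    rw [h1]
    simp only [Fin.coe_castSucc, Fin.val_last]
    ring


section Main

variable (k n : ℕ) (C : ℕ → ℕ)

def wt (α : Fin n) (b : Bool) : ℕ := if b then 1 else α.val

def W (α : Fin n) (v : Fin k → Bool) : ℕ := ∏ β, wt n α (v β)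

def good (v : Fin k → Bool) : Prop :=
  C ((Finset.univ.filter (fun β => v β = true)).card) = 1

instance : DecidablePred (good k C) := fun v => by unfold good; infer_instance

def Gg (α : Fin n) : ℕ := ∑ v ∈ Finset.univ.filter (good k C), W k n α v
def Bb (α : Fin n) : ℕ := ∑ v ∈ Finset.univ.filter (fun v => ¬ good k C v), W k n α v

def statU (u : Fin n → Fin k → Bool) : ℕ :=
  (Finset.univ.filter (fun α => C ((Finset.univ.filter (fun β => u α β = true)).card) = 1)).card

lemma T1 (u : Fin n → Fin k → Bool) :
    (Finset.univ.filter (fun σ : Fin k → Equiv.Perm (Fin n) =>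
        (fun α β => prof (σ β) α) = u)).card = ∏ α, W k n α (u α) := by
  have hset : (Finset.univ.filter (fun σ : Fin k → Equiv.Perm (Fin n) =>
        (fun α β => prof (σ β) α) = u))
      = Fintype.piFinset (fun β => Finset.univ.filter
          (fun τ : Equiv.Perm (Fin n) => prof τ = fun α => u α β)) := by
    ext σ
    simp only [Finset.mem_filter, Finset.mem_univ, true_and, Fintype.mem_piFinset]
    constructor
    · intro h β
      funext α
      exact congrFun (congrFun h α) β
    · intro h
      funext α β
      exact congrFun (h β) α
  rw [hset, Fintype.card_piFinset]
  simp_rw [prof_count]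
  rw [Finset.prod_comm]
  rfl

lemma S1 (m : ℕ) :
    (Finset.univ.filter (fun σ : Fin k → Equiv.Perm (Fin n) =>
        statU k n C (fun α β => prof (σ β) α) = m)).card
      = ∑ u : Fin n → Fin k → Bool,
          if statU k n C u = m then ∏ α, W k n α (u α) else 0 := by
  rw [Finset.card_eq_sum_card_fiberwise
    (f := fun σ : Fin k → Equiv.Perm (Fin n) => (fun α β => prof (σ β) α))
    (t := Finset.univ) (fun _ _ => Finset.mem_univ _)]
  apply Finset.sum_congr rfl
  intro u _
  rw [Finset.filter_filter]
  by_cases h : statU k n C u = m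
  · rw [if_pos h, ← T1 k n u]
    apply congrArg
    apply Finset.filter_congr
    intro σ _
    constructor
    · rintro ⟨_, h2⟩; exact h2
    · intro h2; exact ⟨by rw [h2]; exact h, h2⟩
  · rw [if_neg h, Finset.filter_false_of_mem, Finset.card_empty]
    rintro σ _ ⟨h1, h2⟩
    rw [h2] at h1
    exact h h1


lemma statU_eq (u : Fin n → Fin k → Bool) :
    statU k n C u = (Finset.univ.filter (fun α => good k C (u α))).card := by
  unfold statU good
  congr 1

lemma S2 (m : ℕ) :
    (∑ u : Fin n → Fin k → Bool, if statU k n C u = m then ∏ α, W k n α (u α) else 0)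
      = ∑ A : Finset (Fin n),
          if A.card = m then ∏ α, (if α ∈ A then Gg k n C α else Bb k n C α) else 0 := by
  rw [← Finset.sum_fiberwise_of_maps_to
    (f := fun u => if statU k n C u = m then ∏ α, W k n α (u α) else 0)
    (g := fun u : Fin n → Fin k → Bool => Finset.univ.filter (fun α => good k C (u α)))
    (t := Finset.univ) (fun _ _ => Finset.mem_univ _)]
  apply Finset.sum_congr rfl
  intro A _
  have hstat : ∀ u ∈ Finset.univ.filter (fun u : Fin n → Fin k → Bool =>
      Finset.univ.filter (fun α => good k C (u α)) = A), statU k n C u = A.card := by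
    intro u hu
    simp only [Finset.mem_filter] at hu
    rw [statU_eq, hu.2]
  rw [Finset.sum_congr rfl (fun u hu => by rw [hstat u hu])]
  by_cases h : A.card = m
  · simp only [h, if_true]
    have hfib : (Finset.univ.filter (fun u : Fin n → Fin k → Bool =>
          Finset.univ.filter (fun α => good k C (u α)) = A))
        = Fintype.piFinset (fun α => if α ∈ A
            then Finset.univ.filter (good k C)
            else Finset.univ.filter (fun v => ¬ good k C v)) := by
      ext u
      simp only [Finset.mem_filter, Finset.mem_univ, true_and, Fintype.mem_piFinset,
        Finset.ext_iff]
      apply forall_congr'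
      intro α
      by_cases hA : α ∈ A <;> simp [hA]
    rw [hfib, ← Finset.prod_univ_sum]
    apply Finset.prod_congr rfl
    intro α _
    by_cases hA : α ∈ A <;> simp [hA, Gg, Bb]
  · simp [h]

lemma W_eq (α : Fin n) (v : Fin k → Bool) :
    W k n α v = α.val ^ (k - (Finset.univ.filter (fun β => v β = true)).card) := by
  unfold W wt
  rw [← Finset.prod_filter_mul_prod_filter_not Finset.univ (fun β => v β = true)]
  have h1 : ∏ β ∈ Finset.univ.filter (fun β => v β = true), (if v β then 1 else α.val) = 1 :=
    Finset.prod_eq_one (fun β hβ => by simp [(Finset.mem_filter.mp hβ).2])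
  have hc : (Finset.univ.filter (fun β => ¬ v β = true)).card
      = k - (Finset.univ.filter (fun β => v β = true)).card := by
    have := Finset.card_filter_add_card_filter_not
      (s := (Finset.univ : Finset (Fin k))) (p := fun β => v β = true)
    simp only [Finset.card_univ, Fintype.card_fin] at this
    omega
  have h2 : ∏ β ∈ Finset.univ.filter (fun β => ¬ v β = true), (if v β then 1 else α.val)
      = α.val ^ (k - (Finset.univ.filter (fun β => v β = true)).card) := by
    rw [Finset.prod_congr rfl (fun β hβ => if_neg (Finset.mem_filter.mp hβ).2),
      Finset.prod_const, hc]
  rw [h1, h2, one_mul]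

lemma sum_indicator_powerset (f : ℕ → Prop) [DecidablePred f] (a : ℕ) :
    (∑ s ∈ (Finset.univ : Finset (Fin k)).powerset,
        if f s.card then a ^ (k - s.card) else 0)
      = ∑ i ∈ Finset.range (k+1), k.choose i * (if f i then a ^ (k - i) else 0) := by
  rw [Finset.sum_powerset]
  rw [Finset.card_univ, Fintype.card_fin]
  apply Finset.sum_congr rfl
  intro i _
  have : ∀ s ∈ Finset.powersetCard i (Finset.univ : Finset (Fin k)),
      (if f s.card then a ^ (k - s.card) else 0) = (if f i then a ^ (k - i) else 0) := by
    intro s hs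
    rw [(Finset.mem_powersetCard.mp hs).2]
  rw [Finset.sum_congr rfl this, Finset.sum_const, Finset.card_powersetCard,
    Finset.card_univ, Fintype.card_fin, smul_eq_mul]

lemma filter_sum_eq (p : Fin k → Bool → Prop) [∀ β b, Decidable (p β b)] : True := trivial

lemma Gg_sum (α : Fin n) :
    Gg k n C α = ∑ v ∈ Finset.univ.filter (good k C), α.val ^ (k - (Finset.univ.filter (fun β => v β = true)).card) := by
  unfold Gg
  exact Finset.sum_congr rfl (fun v _ => W_eq k n α v)

lemma sum_bool_to_powerset (h : ℕ → ℕ) :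
    (∑ v : Fin k → Bool, h ((Finset.univ.filter (fun β => v β = true)).card))
      = ∑ s ∈ (Finset.univ : Finset (Fin k)).powerset, h s.card := by
  apply Finset.sum_nbij' (i := fun v => Finset.univ.filter (fun β => v β = true))
    (j := fun s => fun β => decide (β ∈ s))
  · intro v _; exact Finset.mem_powerset.mpr (Finset.subset_univ _)
  · intro s _; exact Finset.mem_univ _
  · intro v _; funext β; simp
  · intro s _; ext β; simp
  · intro v _; rfl

lemma Gg_eq (hC : ∀ i ≤ k, C i ≤ 1) (α : Fin n) :
    Gg k n C α = ∑ i ∈ Finset.range (k+1), k.choose i * C i * α.val ^ (k - i) := by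
  unfold Gg
  rw [Finset.sum_filter]
  have h1 : ∀ v : Fin k → Bool, (if good k C v then W k n α v else 0)
      = (fun c => if C c = 1 then α.val ^ (k - c) else 0)
          ((Finset.univ.filter (fun β => v β = true)).card) := by
    intro v
    rw [W_eq]
    exact if_congr Iff.rfl rfl rfl
  rw [Finset.sum_congr rfl (fun v _ => h1 v),
    sum_bool_to_powerset k (fun c => if C c = 1 then α.val ^ (k - c) else 0),
    sum_indicator_powerset k (fun c => C c = 1) α.val]
  apply Finset.sum_congr rfl
  intro i hi
  have hi' : C i ≤ 1 := hC i (by simpa using Nat.lt_succ_iff.mp (Finset.mem_range.mp hi))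
  interval_cases h : C i <;> simp

lemma Bb_eq (hC : ∀ i ≤ k, C i ≤ 1) (α : Fin n) :
    Bb k n C α = ∑ i ∈ Finset.range (k+1), k.choose i * (1 - C i) * α.val ^ (k - i) := by
  unfold Bb
  rw [Finset.sum_filter]
  have h1 : ∀ v : Fin k → Bool, (if ¬ good k C v then W k n α v else 0)
      = (fun c => if ¬ C c = 1 then α.val ^ (k - c) else 0)
          ((Finset.univ.filter (fun β => v β = true)).card) := by
    intro v
    rw [W_eq]
    exact if_congr Iff.rfl rfl rfl
  rw [Finset.sum_congr rfl (fun v _ => h1 v),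
    sum_bool_to_powerset k (fun c => if ¬ C c = 1 then α.val ^ (k - c) else 0),
    sum_indicator_powerset k (fun c => ¬ C c = 1) α.val]
  apply Finset.sum_congr rfl
  intro i hi
  have hi' : C i ≤ 1 := hC i (by simpa using Nat.lt_succ_iff.mp (Finset.mem_range.mp hi))
  interval_cases h : C i <;> simp


end Main
end AuxA

section Aux2
open Finset Equiv
lemma Lq1 (k : ℕ) (C : ℕ → ℕ) (a : ℕ) (ha : a ≠ 0) :
    ((∑ i ∈ Finset.range (k+1), k.choose i * C i * a^(k-i) : ℕ) : ℚ)
      = (a:ℚ)^k * F k C (a+1) := by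
  unfold F
  push_cast
  rw [Finset.mul_sum]
  apply Finset.sum_congr rfl
  intro i hi
  have hik : i ≤ k := Nat.lt_succ_iff.mp (Finset.mem_range.mp hi)
  have haq : (a:ℚ) ≠ 0 := Nat.cast_ne_zero.mpr ha
  have h1 : ((a:ℚ) + 1) - 1 = (a:ℚ) := by ring
  rw [h1]
  have h2 : (a:ℚ)^(k-i) = (a:ℚ)^k / (a:ℚ)^i := by
    rw [eq_div_iff (pow_ne_zero _ haq), ← pow_add, Nat.sub_add_cancel hik]
  rw [h2]
  ring

lemma sum0 (k : ℕ) (D : ℕ → ℕ) :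
    (∑ i ∈ Finset.range (k+1), k.choose i * D i * 0^(k-i)) = D k := by
  rw [Finset.sum_eq_single k]
  · simp
  · intro i hi hik
    have : k - i ≠ 0 := by
      have := Finset.mem_range.mp hi; omega
    simp [this, zero_pow this]
  · intro h; exact absurd (Finset.self_mem_range_succ k) h

lemma prod_erase_val (n : ℕ) (hn : 1 ≤ n) :
    (∏ α ∈ (Finset.univ : Finset (Fin n)).erase ⟨0, hn⟩, (α.val : ℚ)) = ((n-1).factorial : ℚ) := by
  rw [show ((n-1).factorial : ℚ) = ((∏ x ∈ Finset.Ico 1 n, x : ℕ) : ℚ) by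
    rw [show n = (n-1)+1 by omega, Finset.prod_Ico_id_eq_factorial]; simp]
  push_cast
  apply Finset.prod_bij (fun α _ => α.val)
  · intro α hα
    simp only [Finset.mem_erase, Finset.mem_univ, and_true] at hα
    simp only [Finset.mem_Ico]
    constructor
    · rcases Nat.eq_zero_or_pos α.val with h0 | h1
      · exact absurd (Fin.ext (by simp [h0])) hα
      · exact h1
    · exact α.isLt
  · intro a ha b hb hab
    ext; exact hab
  · intro i hi
    simp only [Finset.mem_Ico] at hi
    refine ⟨⟨i, hi.2⟩, ?_, rfl⟩
    simp only [Finset.mem_erase, Finset.mem_univ, and_true]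
    intro h
    have := congrArg Fin.val h
    simp at this
    omega
  · intro α _; rfl

lemma image_iota (n : ℕ) (hn : 1 ≤ n) :
    ((Finset.univ : Finset (Fin n)).erase ⟨0, hn⟩).image (fun α : Fin n => α.val + 1)
      = Finset.Icc 2 n := by
  ext j
  simp only [Finset.mem_image, Finset.mem_erase, Finset.mem_univ, and_true, Finset.mem_Icc]
  constructor
  · rintro ⟨α, hα, rfl⟩
    have : α.val ≠ 0 := fun h => hα (Fin.ext (by simp [h]))
    have := α.isLt
    omega
  · rintro ⟨h2, hn'⟩
    refine ⟨⟨j - 1, by omega⟩, ?_, by simp; omega⟩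
    intro h
    have := congrArg Fin.val h
    simp only at this
    omega

lemma KL (k n : ℕ) (C : ℕ → ℕ) (hn : 1 ≤ n) (r : ℕ) (GQ BQ : Fin n → ℚ)
    (hGQ : ∀ α : Fin n, α ≠ ⟨0, hn⟩ → GQ α = (α.val : ℚ)^k * F k C (α.val + 1))
    (hBQ : ∀ α : Fin n, α ≠ ⟨0, hn⟩ →
      BQ α = (α.val : ℚ)^k * F k (fun β => 1 - C β) (α.val + 1)) :
    ∑ B ∈ Finset.powersetCard r ((Finset.univ : Finset (Fin n)).erase ⟨0, hn⟩),
        ∏ α ∈ (Finset.univ : Finset (Fin n)).erase ⟨0, hn⟩,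
          (if α ∈ B then GQ α else BQ α)
      = ((n-1).factorial : ℚ)^k * ∑ S ∈ (Finset.Icc 2 n).powersetCard r,
          (∏ j ∈ S, F k C j) * ∏ j ∈ Finset.Icc 2 n \ S, F k (fun β => 1 - C β) j := by
  have hι_inj : Function.Injective (fun α : Fin n => α.val + 1) := fun a b h =>
    Fin.val_injective (by simpa using h)
  have himg : ((Finset.univ : Finset (Fin n)).erase ⟨0, hn⟩).image (fun α => α.val + 1)
      = Finset.Icc 2 n := image_iota n hn
  have step1 : ∀ B ∈ Finset.powersetCard r ((Finset.univ : Finset (Fin n)).erase ⟨0, hn⟩),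
      (∏ α ∈ (Finset.univ : Finset (Fin n)).erase ⟨0, hn⟩, (if α ∈ B then GQ α else BQ α))
        = ((n-1).factorial : ℚ)^k *
            ((∏ j ∈ B.image (fun α : Fin n => α.val + 1), F k C j) *
              ∏ j ∈ Finset.Icc 2 n \ B.image (fun α : Fin n => α.val + 1),
                F k (fun β => 1 - C β) j) := by
    intro B hB
    have hBsub : B ⊆ (Finset.univ : Finset (Fin n)).erase ⟨0, hn⟩ :=
      (Finset.mem_powersetCard.mp hB).1
    have h1 : (∏ α ∈ (Finset.univ : Finset (Fin n)).erase ⟨0, hn⟩,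
          (if α ∈ B then GQ α else BQ α))
        = ∏ α ∈ (Finset.univ : Finset (Fin n)).erase ⟨0, hn⟩, ((α.val : ℚ)^k *
            (if α ∈ B then F k C (α.val + 1) else F k (fun β => 1 - C β) (α.val + 1))) := by
      apply Finset.prod_congr rfl
      intro α hα
      have hαz : α ≠ ⟨0, hn⟩ := (Finset.mem_erase.mp hα).1
      split_ifs with h
      · exact hGQ α hαz
      · exact hBQ α hαz
    rw [h1, Finset.prod_mul_distrib, Finset.prod_pow, prod_erase_val n hn]
    congr 1
    rw [← Finset.prod_filter_mul_prod_filter_not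
      ((Finset.univ : Finset (Fin n)).erase ⟨0, hn⟩) (· ∈ B)]
    have hf1 : ((Finset.univ : Finset (Fin n)).erase ⟨0, hn⟩).filter (· ∈ B) = B := by
      rw [Finset.filter_mem_eq_inter, Finset.inter_eq_right.mpr hBsub]
    have hf2 : ((Finset.univ : Finset (Fin n)).erase ⟨0, hn⟩).filter (· ∉ B)
        = (Finset.univ : Finset (Fin n)).erase ⟨0, hn⟩ \ B :=
      (Finset.sdiff_eq_filter _ _).symm
    rw [hf1, hf2]
    congr 1
    · rw [Finset.prod_image (fun a _ b _ h => hι_inj h)]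
      exact Finset.prod_congr rfl (fun α hα => by rw [if_pos hα])
    · rw [← himg, ← Finset.image_sdiff _ _ hι_inj,
        Finset.prod_image (fun a _ b _ h => hι_inj h)]
      exact Finset.prod_congr rfl
        (fun α hα => by rw [if_neg (Finset.mem_sdiff.mp hα).2])
  rw [Finset.sum_congr rfl step1, ← Finset.mul_sum]
  congr 1
  apply Finset.sum_nbij' (i := fun B => B.image (fun α : Fin n => α.val + 1))
    (j := fun S => S.image (fun j => (⟨(j - 1) % n, Nat.mod_lt _ (by omega)⟩ : Fin n)))
  · intro B hB
    obtain ⟨hBsub, hBcard⟩ := Finset.mem_powersetCard.mp hB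
    rw [Finset.mem_powersetCard]
    constructor
    · rw [← himg]; exact Finset.image_subset_image hBsub
    · rw [Finset.card_image_of_injective _ hι_inj, hBcard]
  · intro S hS
    obtain ⟨hSsub, hScard⟩ := Finset.mem_powersetCard.mp hS
    rw [Finset.mem_powersetCard]
    constructor
    · intro x hx
      obtain ⟨j, hj, rfl⟩ := Finset.mem_image.mp hx
      have hj' := Finset.mem_Icc.mp (hSsub hj)
      rw [Finset.mem_erase]
      refine ⟨?_, Finset.mem_univ _⟩
      intro h
      have := congrArg Fin.val h
      simp only at this
      rw [Nat.mod_eq_of_lt (by omega)] at this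
      omega
    · rw [Finset.card_image_of_injOn, hScard]
      intro a ha b hb hab
      have ha' := Finset.mem_Icc.mp (hSsub ha)
      have hb' := Finset.mem_Icc.mp (hSsub hb)
      have := congrArg Fin.val hab
      simp only at this
      rw [Nat.mod_eq_of_lt (by omega), Nat.mod_eq_of_lt (by omega)] at this
      omega
  · intro B hB
    have hBsub := (Finset.mem_powersetCard.mp hB).1
    rw [Finset.image_image]
    refine Finset.image_congr ?_ |>.trans (Finset.image_id)
    intro α hα
    have : α.val < n := α.isLt
    simp only [Function.comp]
    apply Fin.ext
    show (α.val + 1 - 1) % n = (id α).val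
    rw [Nat.add_sub_cancel, Nat.mod_eq_of_lt this, id_eq]
  · intro S hS
    have hSsub := (Finset.mem_powersetCard.mp hS).1
    rw [Finset.image_image]
    refine Finset.image_congr ?_ |>.trans (Finset.image_id)
    intro j hj
    have hj' := Finset.mem_Icc.mp (hSsub hj)
    simp only [Function.comp]
    show (j - 1) % n + 1 = id j
    rw [Nat.mod_eq_of_lt (by omega), id_eq]
    omega
  · intro B hB
    rfl


end Aux2

theorem stmt1 (k n : ℕ) (hk : 1 ≤ k) (hn : 1 ≤ n) (C : ℕ → ℕ) (hC : ∀ β ≤ k, C β ≤ 1)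
    (m : ℕ) :
    (Nat.card {σ : Fin k → Equiv.Perm (Fin n) //
        (Finset.univ.filter (fun α : Fin n =>
            C ((Finset.univ.filter
                (fun β : Fin k => ∀ j : Fin n, j < α → σ β α < σ β j)).card) = 1)).card
          = m} : ℚ)
      = Ou k C n ((m : ℤ) - C k + 1) := by
  have hCk01 : C k = 0 ∨ C k = 1 := by have := hC k le_rfl; omega
  rw [Nat.card_eq_fintype_card, Fintype.card_subtype]
  have hP : (Finset.univ.filter (fun σ : Fin k → Equiv.Perm (Fin n) =>
      (Finset.univ.filter (fun α : Fin n =>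
          C ((Finset.univ.filter
              (fun β : Fin k => ∀ j : Fin n, j < α → σ β α < σ β j)).card) = 1)).card = m))
    = Finset.univ.filter (fun σ : Fin k → Equiv.Perm (Fin n) =>
        statU k n C (fun α β => prof (σ β) α) = m) := by
    apply Finset.filter_congr
    intro σ _
    have hb : (Finset.univ.filter (fun α : Fin n =>
          C ((Finset.univ.filter
              (fun β : Fin k => ∀ j : Fin n, j < α → σ β α < σ β j)).card) = 1)).card
        = statU k n C (fun α β => prof (σ β) α) := by
      unfold statU
      congr 1
      apply Finset.filter_congr
      intro α _
      have h : (Finset.univ.filter (fun β : Fin k => ∀ j : Fin n, j < α → σ β α < σ β j))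
          = Finset.univ.filter (fun β : Fin k => prof (σ β) α = true) := by
        apply Finset.filter_congr
        intro β _
        simp [prof]
      rw [h]
    rw [hb]
  rw [hP, S1 k n C m, S2 k n C m]
  push_cast
  rw [← Finset.sum_filter]
  have hps : (Finset.univ : Finset (Finset (Fin n))).filter (fun A => A.card = m)
      = Finset.powersetCard m Finset.univ := by
    rw [Finset.powersetCard_eq_filter, Finset.powerset_univ]
  rw [hps]
  have hzval : ((⟨0, hn⟩ : Fin n)).val = 0 := rfl
  have hGz : Gg k n C ⟨0, hn⟩ = C k := by
    rw [Gg_eq k n C hC ⟨0, hn⟩]; exact sum0 k C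
  have hBz : Bb k n C ⟨0, hn⟩ = 1 - C k := by
    rw [Bb_eq k n C hC ⟨0, hn⟩]; exact sum0 k (fun i => 1 - C i)
  have hGQ : ∀ α : Fin n, α ≠ ⟨0, hn⟩ →
      ((Gg k n C α : ℕ) : ℚ) = (α.val : ℚ)^k * F k C (α.val + 1) := by
    intro α hα
    have hval : α.val ≠ 0 := fun h => hα (Fin.ext (by rw [h, hzval]))
    rw [Gg_eq k n C hC α]
    exact Lq1 k C α.val hval
  have hBQ : ∀ α : Fin n, α ≠ ⟨0, hn⟩ →
      ((Bb k n C α : ℕ) : ℚ) = (α.val : ℚ)^k * F k (fun β => 1 - C β) (α.val + 1) := by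
    intro α hα
    have hval : α.val ≠ 0 := fun h => hα (Fin.ext (by rw [h, hzval]))
    rw [Bb_eq k n C hC α]
    exact Lq1 k (fun i => 1 - C i) α.val hval
  rcases hCk01 with hCk | hCk
  · -- C k = 0
    have harg : (m : ℤ) - C k + 1 = ((m + 1 : ℕ) : ℤ) := by rw [hCk]; push_cast; ring
    rw [harg]
    by_cases hr : m + 1 ≤ n
    · unfold Ou
      rw [if_pos ⟨by push_cast; omega, by push_cast; omega⟩, Int.toNat_natCast,
        Nat.add_sub_cancel]
      have hvan : ∀ A ∈ Finset.powersetCard m (Finset.univ : Finset (Fin n)),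
          A ∉ Finset.powersetCard m ((Finset.univ : Finset (Fin n)).erase ⟨0, hn⟩) →
          (∏ α, (if α ∈ A then ((Gg k n C α : ℕ) : ℚ) else ((Bb k n C α : ℕ) : ℚ))) = 0 := by
        intro A hA hA'
        have hzA : (⟨0, hn⟩ : Fin n) ∈ A := by
          obtain ⟨hsub, hcard⟩ := Finset.mem_powersetCard.mp hA
          by_contra hz
          exact hA' (Finset.mem_powersetCard.mpr
            ⟨fun x hx => Finset.mem_erase.mpr ⟨fun h => hz (h ▸ hx), Finset.mem_univ x⟩, hcard⟩)
        apply Finset.prod_eq_zero (Finset.mem_univ (⟨0, hn⟩ : Fin n))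
        rw [if_pos hzA, hGz, hCk]
        norm_num
      rw [← Finset.sum_subset (Finset.powersetCard_mono
        (Finset.subset_univ ((Finset.univ : Finset (Fin n)).erase ⟨0, hn⟩))) hvan]
      have hcongr : ∀ A ∈ Finset.powersetCard m ((Finset.univ : Finset (Fin n)).erase ⟨0, hn⟩),
          (∏ α, (if α ∈ A then ((Gg k n C α : ℕ) : ℚ) else ((Bb k n C α : ℕ) : ℚ)))
            = ∏ α ∈ (Finset.univ : Finset (Fin n)).erase ⟨0, hn⟩,
                (if α ∈ A then ((Gg k n C α : ℕ) : ℚ) else ((Bb k n C α : ℕ) : ℚ)) := by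
        intro A hA
        have hsub := (Finset.mem_powersetCard.mp hA).1
        have hzA : (⟨0, hn⟩ : Fin n) ∉ A := fun h =>
          Finset.notMem_erase _ _ (hsub h)
        rw [← Finset.mul_prod_erase Finset.univ _ (Finset.mem_univ (⟨0, hn⟩ : Fin n)),
          if_neg hzA, hBz, hCk]
        norm_num
      rw [Finset.sum_congr rfl hcongr, KL k n C hn m _ _ hGQ hBQ]
    · unfold Ou
      rw [if_neg (by push_cast; omega)]
      rcases Nat.lt_or_ge n m with hnm | hnm
      · rw [Finset.powersetCard_eq_empty.mpr (by simpa using hnm), Finset.sum_empty]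
      · have hmn : m = n := by omega
        have hcard : m = (Finset.univ : Finset (Fin n)).card := by simp [hmn]
        rw [hcard, Finset.powersetCard_self, Finset.sum_singleton]
        apply Finset.prod_eq_zero (Finset.mem_univ (⟨0, hn⟩ : Fin n))
        rw [if_pos (Finset.mem_univ _), hGz, hCk]
        norm_num
  · -- C k = 1
    have harg : (m : ℤ) - C k + 1 = ((m : ℕ) : ℤ) := by rw [hCk]; push_cast; ring
    rw [harg]
    by_cases hr : 1 ≤ m ∧ m ≤ n
    · unfold Ou
      rw [if_pos ⟨by push_cast; omega, by push_cast; omega⟩, Int.toNat_natCast]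
      have hvan : ∀ A ∈ Finset.powersetCard m (Finset.univ : Finset (Fin n)),
          (∏ α, (if α ∈ A then ((Gg k n C α : ℕ) : ℚ) else ((Bb k n C α : ℕ) : ℚ))) ≠ 0 →
          (⟨0, hn⟩ : Fin n) ∈ A := by
        intro A _ hne
        by_contra hzA
        exact hne (Finset.prod_eq_zero (Finset.mem_univ (⟨0, hn⟩ : Fin n))
          (by rw [if_neg hzA, hBz, hCk]; norm_num))
      rw [← Finset.sum_filter_of_ne hvan]
      have hstep : ∑ A ∈ (Finset.powersetCard m (Finset.univ : Finset (Fin n))).filter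
            (fun A => (⟨0, hn⟩ : Fin n) ∈ A),
            (∏ α, (if α ∈ A then ((Gg k n C α : ℕ) : ℚ) else ((Bb k n C α : ℕ) : ℚ)))
          = ∑ B ∈ Finset.powersetCard (m - 1) ((Finset.univ : Finset (Fin n)).erase ⟨0, hn⟩),
              ∏ α ∈ (Finset.univ : Finset (Fin n)).erase ⟨0, hn⟩,
                (if α ∈ B then ((Gg k n C α : ℕ) : ℚ) else ((Bb k n C α : ℕ) : ℚ)) := by
        apply Finset.sum_nbij' (i := fun A => A.erase (⟨0, hn⟩ : Fin n))
          (j := fun B => insert (⟨0, hn⟩ : Fin n) B)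
        · intro A hA
          rw [Finset.mem_filter, Finset.mem_powersetCard] at hA
          obtain ⟨⟨hsub, hcard⟩, hzA⟩ := hA
          rw [Finset.mem_powersetCard]
          exact ⟨Finset.erase_subset_erase _ hsub, by rw [Finset.card_erase_of_mem hzA, hcard]⟩
        · intro B hB
          obtain ⟨hsub, hcard⟩ := Finset.mem_powersetCard.mp hB
          have hzB : (⟨0, hn⟩ : Fin n) ∉ B := fun h => Finset.notMem_erase _ _ (hsub h)
          rw [Finset.mem_filter, Finset.mem_powersetCard]
          refine ⟨⟨Finset.subset_univ _, ?_⟩, Finset.mem_insert_self _ _⟩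
          rw [Finset.card_insert_of_notMem hzB, hcard]
          omega
        · intro A hA
          rw [Finset.mem_filter] at hA
          exact Finset.insert_erase hA.2
        · intro B hB
          obtain ⟨hsub, _⟩ := Finset.mem_powersetCard.mp hB
          have hzB : (⟨0, hn⟩ : Fin n) ∉ B := fun h => Finset.notMem_erase _ _ (hsub h)
          exact Finset.erase_insert hzB
        · intro A hA
          rw [Finset.mem_filter] at hA
          obtain ⟨_, hzA⟩ := hA
          rw [← Finset.mul_prod_erase Finset.univ _ (Finset.mem_univ (⟨0, hn⟩ : Fin n)),
            if_pos hzA, hGz, hCk]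
          rw [Nat.cast_one, one_mul]
          apply Finset.prod_congr rfl
          intro α hα
          have hαz : α ≠ ⟨0, hn⟩ := (Finset.mem_erase.mp hα).1
          by_cases h : α ∈ A
          · rw [if_pos h, if_pos (Finset.mem_erase.mpr ⟨hαz, h⟩)]
          · rw [if_neg h, if_neg (fun hc => h (Finset.mem_of_mem_erase hc))]
      rw [hstep, KL k n C hn (m - 1) _ _ hGQ hBQ]
    · unfold Ou
      rw [if_neg (by push_cast; omega)]
      rcases Nat.lt_or_ge n m with hnm | hnm
      · rw [Finset.powersetCard_eq_empty.mpr (by simpa using hnm), Finset.sum_empty]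
      · have hm0 : m = 0 := by omega
        subst hm0
        rw [Finset.powersetCard_zero, Finset.sum_singleton]
        apply Finset.prod_eq_zero (Finset.mem_univ (⟨0, hn⟩ : Fin n))
        rw [if_neg (Finset.notMem_empty _), hBz, hCk]
        norm_num
end

section
/- Let k ≥ 1, n ≥ 1 and 1 ≤ m ≤ n. The number of k-tuples (σ_1,…,σ_k) of permutations of {1,…,n} such that exactly m positions α ∈ {1,…,n} are a left-to-right minimum of at least one σ_β equals (n−1)!^k · ∑_{S ⊆ {2,…,n}, |S| = m−1} ∏_{j∈S} ((j/(j−1))^k − 1). For all other values of m the count is 0. -/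
open Finset Equiv

namespace Stmt2Aux

variable {n : ℕ}

def phiFun (v : Fin (n+1)) (τ : Equiv.Perm (Fin n)) : Fin (n+1) → Fin (n+1) :=
  fun i => Fin.lastCases v (fun j => v.succAbove (τ j)) i

@[simp] lemma phiFun_last (v : Fin (n+1)) (τ : Equiv.Perm (Fin n)) :
    phiFun v τ (Fin.last n) = v := by simp [phiFun]

@[simp] lemma phiFun_castSucc (v : Fin (n+1)) (τ : Equiv.Perm (Fin n)) (j : Fin n) :
    phiFun v τ j.castSucc = v.succAbove (τ j) := by simp [phiFun]

lemma phiFun_injective (v : Fin (n+1)) (τ : Equiv.Perm (Fin n)) :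
    Function.Injective (phiFun v τ) := by
  intro i1 i2 h
  induction i1 using Fin.lastCases with
  | last =>
    induction i2 using Fin.lastCases with
    | last => rfl
    | cast j =>
      rw [phiFun_last, phiFun_castSucc] at h
      exact absurd h.symm (Fin.succAbove_ne v _)
  | cast i =>
    induction i2 using Fin.lastCases with
    | last =>
      rw [phiFun_last, phiFun_castSucc] at h
      exact absurd h (Fin.succAbove_ne v _)
    | cast j =>
      rw [phiFun_castSucc, phiFun_castSucc] at h
      rw [τ.injective (Fin.succAbove_right_injective h)]

noncomputable def Phi (p : Fin (n+1) × Equiv.Perm (Fin n)) : Equiv.Perm (Fin (n+1)) :=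
  Equiv.ofBijective _ (Finite.injective_iff_bijective.mp (phiFun_injective p.1 p.2))

@[simp] lemma Phi_last (p : Fin (n+1) × Equiv.Perm (Fin n)) :
    Phi p (Fin.last n) = p.1 := phiFun_last _ _

@[simp] lemma Phi_castSucc (p : Fin (n+1) × Equiv.Perm (Fin n)) (j : Fin n) :
    Phi p j.castSucc = p.1.succAbove (p.2 j) := phiFun_castSucc _ _ _

lemma Phi_injective : Function.Injective (Phi (n := n)) := by
  intro p q h
  have hv : p.1 = q.1 := by
    have := congrArg (fun e : Equiv.Perm (Fin (n+1)) => e (Fin.last n)) h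
    simpa using this
  have ht : p.2 = q.2 := by
    apply Equiv.ext
    intro j
    have := congrArg (fun e : Equiv.Perm (Fin (n+1)) => e j.castSucc) h
    simp only [Phi_castSucc, hv] at this
    exact Fin.succAbove_right_injective this
  exact Prod.ext hv ht

lemma Phi_bijective : Function.Bijective (Phi (n := n)) := by
  rw [Fintype.bijective_iff_injective_and_card]
  refine ⟨Phi_injective, ?_⟩
  simp [Fintype.card_perm, Nat.factorial_succ]

end Stmt2Aux

namespace Stmt2Aux

lemma phi_min_last (p : Fin (n+1) × Equiv.Perm (Fin n)) :
    (∀ j : Fin (n+1), j < Fin.last n → Phi p (Fin.last n) < Phi p j) ↔ p.1 = 0 := by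
  constructor
  · intro H
    by_contra hv
    have hn0 : 0 < n := by
      rcases Nat.eq_zero_or_pos n with h | h
      · exact absurd (Fin.ext (by have := p.1.isLt; omega : p.1.val = (0 : Fin (n+1)).val)) hv
      · exact h
    set i0 : Fin n := ⟨0, hn0⟩
    have hj : (p.2.symm i0).castSucc < Fin.last n := Fin.castSucc_lt_last _
    have := H _ hj
    rw [Phi_last, Phi_castSucc, Equiv.apply_symm_apply] at this
    have h0 : i0.castSucc < p.1 := by
      have : (0:ℕ) < p.1.val := Nat.pos_of_ne_zero (fun h => hv (Fin.ext h))
      exact Fin.lt_def.mpr this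
    rw [Fin.succAbove_of_castSucc_lt _ _ h0] at this
    exact absurd this (not_lt.mpr (le_of_lt h0))
  · intro hv j hj
    induction j using Fin.lastCases with
    | last => exact absurd hj (lt_irrefl _)
    | cast i =>
      rw [Phi_last, Phi_castSucc, hv, Fin.succAbove_zero]
      exact Fin.succ_pos _

lemma phi_min_castSucc (p : Fin (n+1) × Equiv.Perm (Fin n)) (α : Fin n) :
    (∀ j : Fin (n+1), j < α.castSucc → Phi p α.castSucc < Phi p j) ↔
      (∀ j : Fin n, j < α → p.2 α < p.2 j) := by
  constructor
  · intro H j hj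
    have := H j.castSucc (by simpa using hj)
    rw [Phi_castSucc, Phi_castSucc] at this
    exact (Fin.succAbove_lt_succAbove_iff).mp this
  · intro H j hj
    induction j using Fin.lastCases with
    | last => exact absurd (hj.trans (Fin.castSucc_lt_last α)) (lt_irrefl _)
    | cast i =>
      rw [Phi_castSucc, Phi_castSucc]
      exact (Fin.succAbove_lt_succAbove_iff).mpr (H i (by simpa using hj))

variable {k : ℕ}

lemma marked_card (v : Fin k → Fin (n+1)) (t : Fin k → Equiv.Perm (Fin n)) :
    (univ.filter fun α : Fin (n+1) =>
        ∃ β, ∀ j, j < α → Phi (v β, t β) α < Phi (v β, t β) j).card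
    = (univ.filter fun α : Fin n => ∃ β, ∀ j, j < α → t β α < t β j).card
      + (if ∃ β, v β = 0 then 1 else 0) := by
  rw [Finset.card_filter, Finset.card_filter, Fin.sum_univ_castSucc]
  congr 1
  · apply Finset.sum_congr rfl
    intro α _
    refine if_congr (exists_congr fun β => ?_) rfl rfl
    exact phi_min_castSucc (v β, t β) α
  · refine if_congr (exists_congr fun β => ?_) rfl rfl
    exact (phi_min_last (v β, t β)).trans Iff.rfl

end Stmt2Aux

namespace Stmt2Aux

variable {k : ℕ}

noncomputable def bigF (k n : ℕ) :
    ((Fin k → Fin (n+1)) × (Fin k → Equiv.Perm (Fin n))) ≃ (Fin k → Equiv.Perm (Fin (n+1))) :=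
  Equiv.ofBijective (fun p β => Phi (p.1 β, p.2 β)) <| by
    rw [Fintype.bijective_iff_injective_and_card]
    constructor
    · intro p q h
      have h' : ∀ β, (p.1 β, p.2 β) = (q.1 β, q.2 β) := fun β =>
        Phi_injective (congrFun h β)
      exact Prod.ext (funext fun β => congrArg Prod.fst (h' β))
        (funext fun β => congrArg Prod.snd (h' β))
    · simp [Fintype.card_fun, Fintype.card_perm, Nat.factorial_succ, mul_pow]

lemma card_filter_equiv {X Y : Type*} [Fintype X] [Fintype Y] (e : X ≃ Y)
    (p : Y → Prop) [DecidablePred p] :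
    (univ.filter fun x => p (e x)).card = (univ.filter p).card := by
  apply Finset.card_bij (fun x _ => e x)
  · intro a ha; simp only [mem_filter, mem_univ, true_and] at *; exact ha
  · intro a _ b _ h; exact e.injective h
  · intro y hy
    refine ⟨e.symm y, ?_, by simp⟩
    simp only [mem_filter, mem_univ, true_and, Equiv.apply_symm_apply] at *
    exact hy

lemma card_v_ne (k n : ℕ) :
    (univ.filter fun v : Fin k → Fin (n+1) => ¬∃ β, v β = 0).card = n^k := by
  rw [← Fintype.card_subtype]
  have e : {v : Fin k → Fin (n+1) // ¬∃ β, v β = 0} ≃ (Fin k → {x : Fin (n+1) // x ≠ 0}) :=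
    (Equiv.subtypeEquivRight (fun v => by push_neg; rfl)).trans Equiv.subtypePiEquivPi
  have hx : Fintype.card {x : Fin (n+1) // x ≠ 0} = n := by
    have h2 : Fintype.card {x : Fin (n+1) // ¬ x = 0} = n := by
      rw [Fintype.card_subtype_compl, Fintype.card_subtype_eq, Fintype.card_fin]; simp
    simpa using h2
  rw [Fintype.card_congr e, Fintype.card_fun, Fintype.card_fin, hx]

lemma card_v_ex (k n : ℕ) :
    (univ.filter fun v : Fin k → Fin (n+1) => ∃ β, v β = 0).card = (n+1)^k - n^k := by
  have h := Finset.card_filter_add_card_filter_not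
    (s := (univ : Finset (Fin k → Fin (n+1)))) (p := fun v => ∃ β, v β = 0)
  have hu : (univ : Finset (Fin k → Fin (n+1))).card = (n+1)^k := by
    rw [Finset.card_univ, Fintype.card_fun, Fintype.card_fin, Fintype.card_fin]
  rw [hu, card_v_ne] at h
  exact Nat.eq_sub_of_add_eq h

end Stmt2Aux

namespace Stmt2Aux

def C (k n m : ℕ) : ℕ :=
  ∑ S ∈ (Finset.Icc 2 (n+1)).powersetCard m,
    (∏ j ∈ S, (j^k - (j-1)^k)) * ∏ j ∈ (Finset.Icc 2 (n+1)) \ S, (j-1)^k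

lemma Icc_insert (n : ℕ) : Finset.Icc 2 (n+2) = insert (n+2) (Finset.Icc 2 (n+1)) := by
  ext x; simp only [Finset.mem_Icc, Finset.mem_insert]; omega

lemma not_mem_Icc (n : ℕ) : n + 2 ∉ Finset.Icc 2 (n+1) := by
  simp [Finset.mem_Icc]

lemma C_zero_base (k m : ℕ) : C k 0 m = if m = 0 then 1 else 0 := by
  unfold C
  have h : Finset.Icc 2 1 = (∅ : Finset ℕ) := by
    ext x; simp [Finset.mem_Icc]
  rw [h]
  rcases m with _ | m
  · simp
  · rw [Finset.powersetCard_eq_empty.mpr (by simp)]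
    simp

lemma C_top (k n m : ℕ) (h : n < m) : C k n m = 0 := by
  unfold C
  rw [Finset.powersetCard_eq_empty.mpr (by rw [Nat.card_Icc]; omega)]
  simp

lemma sdiff_insert_insert (n : ℕ) (S : Finset ℕ) (hS : S ⊆ Finset.Icc 2 (n+1)) :
    insert (n+2) (Finset.Icc 2 (n+1)) \ insert (n+2) S = Finset.Icc 2 (n+1) \ S := by
  ext x
  simp only [Finset.mem_sdiff, Finset.mem_insert, Finset.mem_Icc, not_or]
  constructor
  · rintro ⟨h1 | h1, h2, h3⟩
    · exact absurd h1 h2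
    · exact ⟨h1, h3⟩
  · intro ⟨h1, h2⟩
    exact ⟨Or.inr h1, by omega, h2⟩

lemma C_rec_zero (k n : ℕ) : C k (n+1) 0 = (n+1)^k * C k n 0 := by
  unfold C
  rw [Finset.powersetCard_zero, Finset.powersetCard_zero, Finset.sum_singleton,
    Finset.sum_singleton, Finset.prod_empty, Finset.sdiff_empty,
    Finset.sdiff_empty, Icc_insert, Finset.prod_insert (not_mem_Icc n)]
  have : (n + 2 - 1)^k = (n+1)^k := by norm_num
  rw [this]; ring

lemma C_rec (k n m : ℕ) :
    C k (n+1) (m+1) = (n+1)^k * C k n (m+1) + ((n+2)^k - (n+1)^k) * C k n m := by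
  unfold C
  rw [Icc_insert, Finset.powersetCard_succ_insert (not_mem_Icc n)]
  rw [Finset.sum_union]
  · congr 1
    · rw [Finset.mul_sum]
      apply Finset.sum_congr rfl
      intro S hS
      have hSsub : S ⊆ Finset.Icc 2 (n+1) := (Finset.mem_powersetCard.mp hS).1
      have hnS : (n+2) ∉ S := fun h => not_mem_Icc n (hSsub h)
      rw [Finset.insert_sdiff_of_notMem _ hnS, Finset.prod_insert
        (fun h => not_mem_Icc n (Finset.mem_sdiff.mp h).1)]
      have : (n + 2 - 1)^k = (n+1)^k := by norm_num
      rw [this]; ring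
    · rw [Finset.sum_image, Finset.mul_sum]
      · apply Finset.sum_congr rfl
        intro S hS
        have hSsub : S ⊆ Finset.Icc 2 (n+1) := (Finset.mem_powersetCard.mp hS).1
        have hnS : (n+2) ∉ S := fun h => not_mem_Icc n (hSsub h)
        rw [Finset.prod_insert hnS, sdiff_insert_insert n S hSsub]
        have : (n + 2)^k - (n + 2 - 1)^k = (n+2)^k - (n+1)^k := by norm_num
        rw [this]; ring
      · intro S hS T hT h
        have hnS : (n+2) ∉ S := fun h2 =>
          not_mem_Icc n ((Finset.mem_powersetCard.mp hS).1 h2)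
        have hnT : (n+2) ∉ T := fun h2 =>
          not_mem_Icc n ((Finset.mem_powersetCard.mp hT).1 h2)
        rw [← Finset.erase_insert hnS, ← Finset.erase_insert hnT, h]
  · rw [Finset.disjoint_left]
    intro S hS hS2
    rw [Finset.mem_image] at hS2
    obtain ⟨T, _, rfl⟩ := hS2
    exact not_mem_Icc n ((Finset.mem_powersetCard.mp hS).1 (Finset.mem_insert_self _ _))

end Stmt2Aux

namespace Stmt2Aux

@[simp] lemma bigF_apply (k n : ℕ) (p : (Fin k → Fin (n+1)) × (Fin k → Equiv.Perm (Fin n)))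
    (β : Fin k) : bigF k n p β = Phi (p.1 β, p.2 β) := rfl

lemma main (k : ℕ) (hk : 0 < k) (n : ℕ) : ∀ m : ℕ,
    ((univ : Finset (Fin k → Equiv.Perm (Fin (n+1)))).filter fun σ =>
      (univ.filter fun α : Fin (n+1) => ∃ β, ∀ j, j < α → σ β α < σ β j).card = m).card
    = if m = 0 then 0 else C k n (m-1) := by
  induction n with
  | zero =>
    intro m
    have hin : ∀ σ : Fin k → Equiv.Perm (Fin 1),
        (univ.filter fun α : Fin 1 => ∃ β, ∀ j, j < α → σ β α < σ β j).card = 1 := by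
      intro σ
      rw [Finset.filter_true_of_mem, Finset.card_univ, Fintype.card_fin]
      intro α _
      exact ⟨⟨0, hk⟩, fun j hj => absurd hj (by rw [Subsingleton.elim j α]; exact lt_irrefl α)⟩
    by_cases hm : m = 1
    · subst hm
      rw [Finset.filter_true_of_mem (fun σ _ => hin σ), Finset.card_univ]
      simp [Fintype.card_fun, Fintype.card_perm, C_zero_base]
    · rw [Finset.filter_false_of_mem (fun σ _ => by rw [hin σ]; exact fun h => hm h.symm),
        Finset.card_empty]
      rcases m with _ | _ | m
      · simp
      · exact absurd rfl hm
      · simp [C_zero_base]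
  | succ n ih =>
    intro m
    rw [← card_filter_equiv (bigF k (n+1))
      (fun σ : Fin k → Equiv.Perm (Fin (n+2)) =>
        (univ.filter fun α : Fin (n+2) => ∃ β, ∀ j, j < α → σ β α < σ β j).card = m)]
    have hP : ∀ p : (Fin k → Fin (n+2)) × (Fin k → Equiv.Perm (Fin (n+1))),
        ((univ.filter fun α : Fin (n+2) =>
            ∃ β, ∀ j, j < α → bigF k (n+1) p β α < bigF k (n+1) p β j).card = m)
        ↔ ((univ.filter fun α : Fin (n+1) =>
              ∃ β, ∀ j, j < α → p.2 β α < p.2 β j).card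
            + (if ∃ β, p.1 β = 0 then 1 else 0) = m) := by
      intro p
      rw [show (univ.filter fun α : Fin (n+2) =>
            ∃ β, ∀ j, j < α → bigF k (n+1) p β α < bigF k (n+1) p β j).card
          = (univ.filter fun α : Fin (n+1) =>
              ∃ β, ∀ j, j < α → p.2 β α < p.2 β j).card
            + (if ∃ β, p.1 β = 0 then 1 else 0) from marked_card p.1 p.2]
    rw [Finset.filter_congr (fun p _ => (hP p))]
    rw [show ((univ : Finset ((Fin k → Fin (n+2)) × (Fin k → Equiv.Perm (Fin (n+1))))).filter
        fun p => (univ.filter fun α : Fin (n+1) =>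
            ∃ β, ∀ j, j < α → p.2 β α < p.2 β j).card
          + (if ∃ β, p.1 β = 0 then 1 else 0) = m)
      = ((univ.filter fun v : Fin k → Fin (n+2) => ¬∃ β, v β = 0) ×ˢ
          (univ.filter fun t : Fin k → Equiv.Perm (Fin (n+1)) =>
            (univ.filter fun α : Fin (n+1) => ∃ β, ∀ j, j < α → t β α < t β j).card = m)) ∪
        ((univ.filter fun v : Fin k → Fin (n+2) => ∃ β, v β = 0) ×ˢ
          (univ.filter fun t : Fin k → Equiv.Perm (Fin (n+1)) =>
            (univ.filter fun α : Fin (n+1) => ∃ β, ∀ j, j < α → t β α < t β j).card + 1 = m))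
      from ?_]
    rotate_left
    · ext p
      simp only [Finset.mem_filter, Finset.mem_union, Finset.mem_product, Finset.mem_univ,
        true_and]
      by_cases hE : ∃ β, p.1 β = 0
      · simp [hE]
      · simp [hE]
    rw [Finset.card_union_of_disjoint, Finset.card_product, Finset.card_product,
      card_v_ne, card_v_ex, ih m]
    rotate_left
    · rw [Finset.disjoint_left]
      intro p hp1 hp2
      have h1 := (Finset.mem_product.mp hp1).1
      have h2 := (Finset.mem_product.mp hp2).1
      rw [Finset.mem_filter] at h1 h2
      exact h1.2 h2.2
    rcases m with _ | m
    · rw [Finset.filter_false_of_mem (fun t _ => by omega), Finset.card_empty]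
      simp
    · rw [Finset.filter_congr (fun t _ => by constructor <;> omega :
        ∀ t ∈ (univ : Finset (Fin k → Equiv.Perm (Fin (n+1)))),
          ((univ.filter fun α : Fin (n+1) => ∃ β, ∀ j, j < α → t β α < t β j).card + 1 = m + 1)
          ↔ ((univ.filter fun α : Fin (n+1) => ∃ β, ∀ j, j < α → t β α < t β j).card = m)),
        ih m]
      rcases m with _ | m
      · simp [C_rec_zero]
      · simp only [Nat.succ_ne_zero, if_false, Nat.add_sub_cancel]
        rw [C_rec]

end Stmt2Aux

namespace Stmt2Aux

lemma fact_prod : ∀ n : ℕ, ∏ j ∈ Finset.Icc 2 (n+1), ((j:ℚ) - 1) = (n.factorial : ℚ)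
  | 0 => by
    have h : Finset.Icc 2 1 = (∅ : Finset ℕ) := by ext x; simp [Finset.mem_Icc]
    simp [h]
  | (n+1) => by
    rw [Icc_insert, Finset.prod_insert (not_mem_Icc n), fact_prod n, Nat.factorial_succ]
    push_cast
    ring

lemma C_cast (k n m' : ℕ) :
    (C k n m' : ℚ) = (n.factorial : ℚ)^k *
      ∑ S ∈ (Finset.Icc 2 (n+1)).powersetCard m',
        ∏ j ∈ S, (((j:ℚ) / ((j:ℚ) - 1))^k - 1) := by
  unfold C
  rw [Nat.cast_sum, Finset.mul_sum]
  apply Finset.sum_congr rfl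
  intro S hS
  obtain ⟨hSsub, -⟩ := Finset.mem_powersetCard.mp hS
  have hmem : ∀ j ∈ S, 2 ≤ j := fun j hj => (Finset.mem_Icc.mp (hSsub hj)).1
  have hmem' : ∀ j ∈ Finset.Icc 2 (n+1) \ S, 2 ≤ j := fun j hj =>
    (Finset.mem_Icc.mp (Finset.mem_sdiff.mp hj).1).1
  have hcast : ∀ j : ℕ, 2 ≤ j → ((j - 1 : ℕ) : ℚ) = (j:ℚ) - 1 := fun j hj => by
    push_cast [Nat.cast_sub (by omega : 1 ≤ j)]; ring
  rw [Nat.cast_mul, Nat.cast_prod, Nat.cast_prod]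
  have h1 : ∀ j ∈ S, ((j^k - (j-1)^k : ℕ) : ℚ) = (j:ℚ)^k - ((j:ℚ)-1)^k := by
    intro j hj
    rw [Nat.cast_sub (Nat.pow_le_pow_left (Nat.sub_le j 1) k), Nat.cast_pow, Nat.cast_pow,
      hcast j (hmem j hj)]
  have h2 : ∀ j ∈ Finset.Icc 2 (n+1) \ S, (((j-1)^k : ℕ) : ℚ) = ((j:ℚ)-1)^k := by
    intro j hj
    rw [Nat.cast_pow, hcast j (hmem' j hj)]
  rw [Finset.prod_congr rfl h1, Finset.prod_congr rfl h2]
  have hfact : (n.factorial : ℚ)^k = ∏ j ∈ Finset.Icc 2 (n+1), ((j:ℚ)-1)^k := by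
    rw [← fact_prod n, ← Finset.prod_pow]
  rw [hfact, ← Finset.prod_sdiff hSsub, mul_assoc, ← Finset.prod_mul_distrib]
  rw [mul_comm]
  congr 1
  apply Finset.prod_congr rfl
  intro j hj
  have hne : ((j:ℚ) - 1) ≠ 0 := by
    have := hmem j hj
    have : (2:ℚ) ≤ (j:ℚ) := by exact_mod_cast this
    intro h
    nlinarith
  rw [div_pow, mul_sub, mul_one, mul_div_cancel₀ _ (pow_ne_zero k hne)]

end Stmt2Aux

theorem stmt2 (k n : ℕ) (hk : 1 ≤ k) (hn : 1 ≤ n) (m : ℕ) :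
    (Nat.card {σ : Fin k → Equiv.Perm (Fin n) //
        (Finset.univ.filter (fun α : Fin n =>
            ∃ β : Fin k, ∀ j : Fin n, j < α → σ β α < σ β j)).card = m} : ℚ)
      = if 1 ≤ m ∧ m ≤ n then
          ((n - 1).factorial : ℚ) ^ k *
            ∑ S ∈ (Finset.Icc 2 n).powersetCard (m - 1),
              ∏ j ∈ S, (((j : ℚ) / ((j : ℚ) - 1)) ^ k - 1)
        else 0 := by
  obtain ⟨n', rfl⟩ : ∃ n', n = n' + 1 := ⟨n - 1, by omega⟩
  rw [Nat.card_eq_fintype_card, Fintype.card_subtype, Stmt2Aux.main k hk n' m]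
  rcases m with _ | m
  · simp
  · simp only [Nat.succ_ne_zero, if_false, Nat.add_sub_cancel]
    by_cases hm : m + 1 ≤ n' + 1
    · rw [if_pos ⟨Nat.succ_le_succ (Nat.zero_le m), hm⟩, Stmt2Aux.C_cast]
    · rw [if_neg (fun h => hm h.2), Stmt2Aux.C_top k n' m (by omega)]
      simp
end

section
/- Let k ≥ 1, n ≥ 1 and C = (c_0,…,c_k) ∈ {0,1}^{k+1}. For every integer m, O_C(n, m) = O_{C'}(n, n − m); equivalently, O^u_C(n, m) = O^u_{C'}(n, n − m + 1) for every integer m. -/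
lemma F_congr (k : ℕ) (C D : ℕ → ℕ) (h : ∀ β ≤ k, C β = D β) (j : ℕ) :
    F k C j = F k D j := by
  unfold F
  refine Finset.sum_congr rfl fun β hβ => ?_
  rw [h β (by simpa [Nat.lt_succ_iff] using Finset.mem_range.mp hβ)]

lemma Ou_dual (k n : ℕ) (hn : 1 ≤ n) (C : ℕ → ℕ) (hC : ∀ β ≤ k, C β ≤ 1) (m : ℤ) :
    Ou k C n m = Ou k (fun β => 1 - C β) n ((n : ℤ) - m + 1) := by
  unfold Ou
  by_cases h : 1 ≤ m ∧ m ≤ (n : ℤ)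
  · rw [if_pos h, if_pos (by omega)]
    congr 1
    have hcard : (Finset.Icc 2 n).card = n - 1 := by
      rw [Nat.card_Icc]; omega
    refine Finset.sum_nbij' (i := fun S => Finset.Icc 2 n \ S)
      (j := fun S => Finset.Icc 2 n \ S) ?_ ?_ ?_ ?_ ?_
    · intro S hS
      rw [Finset.mem_powersetCard] at hS ⊢
      refine ⟨Finset.sdiff_subset, ?_⟩
      rw [Finset.card_sdiff_of_subset hS.1, hcard, hS.2]
      omega
    · intro S hS
      rw [Finset.mem_powersetCard] at hS ⊢
      refine ⟨Finset.sdiff_subset, ?_⟩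
      rw [Finset.card_sdiff_of_subset hS.1, hcard, hS.2]
      omega
    · intro S hS
      rw [Finset.mem_powersetCard] at hS
      simp [Finset.sdiff_sdiff_eq_self hS.1]
    · intro S hS
      rw [Finset.mem_powersetCard] at hS
      simp [Finset.sdiff_sdiff_eq_self hS.1]
    · intro S hS
      rw [Finset.mem_powersetCard] at hS
      rw [Finset.sdiff_sdiff_eq_self hS.1]
      rw [mul_comm]
      congr 1
      exact Finset.prod_congr rfl fun j _ =>
        F_congr k C (fun β => 1 - (1 - C β)) (fun β hβ => by show C β = 1 - (1 - C β); have := hC β hβ; omega) j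
  · rw [if_neg h, if_neg (by omega)]

theorem stmt3 (k n : ℕ) (hk : 1 ≤ k) (hn : 1 ≤ n) (C : ℕ → ℕ) (hC : ∀ β ≤ k, C β ≤ 1) :
    (∀ m : ℤ, Oc k C n m = Oc k (fun β => 1 - C β) n ((n : ℤ) - m)) ∧
    (∀ m : ℤ, Ou k C n m = Ou k (fun β => 1 - C β) n ((n : ℤ) - m + 1)) := by
  constructor
  · intro m
    unfold Oc
    have hCk := hC k le_rfl
    have heq : (n : ℤ) - m - (1 - C k : ℕ) + 1 = (n : ℤ) - (m - C k + 1) + 1 := by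
      omega
    rw [heq]
    exact Ou_dual k n hn C hC (m - C k + 1)
  · exact Ou_dual k n hn C hC
end

section
/- Let k ≥ 1 and n ≥ 1. Then O_{(0,0,…,0)}(n, 0) = O_{(1,1,…,1)}(n, n) = n!^k, and for every C = (c_0,…,c_k) ∈ {0,1}^{k+1}, ∑_{m=0}^{n} O_C(n, m) = n!^k. -/
lemma F_one (k j : ℕ) (hj : 2 ≤ j) :
    F k (fun _ => 1) j = ((j : ℚ) / ((j : ℚ) - 1)) ^ k := by
  have hd : ((j : ℚ) - 1) ≠ 0 := by
    have : (2 : ℚ) ≤ (j : ℚ) := by exact_mod_cast hj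
    nlinarith
  have h := add_pow (1 / ((j : ℚ) - 1)) 1 k
  have hx : (1 / ((j : ℚ) - 1) + 1) = (j : ℚ) / ((j : ℚ) - 1) := by
    field_simp
    ring
  rw [hx] at h
  rw [F, h]
  refine Finset.sum_congr rfl fun β _ => ?_
  rw [div_pow, one_pow, one_pow]
  ring

lemma F_add (k j : ℕ) (C : ℕ → ℕ) (hC : ∀ β ≤ k, C β ≤ 1) :
    F k C j + F k (fun β => 1 - C β) j = F k (fun _ => 1) j := by
  rw [F, F, F, ← Finset.sum_add_distrib]
  refine Finset.sum_congr rfl fun β hβ => ?_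
  have hβk : β ≤ k := by simpa [Nat.lt_succ_iff] using Finset.mem_range.mp hβ
  have h1 : (C β : ℚ) + ((1 - C β : ℕ) : ℚ) = 1 := by
    have := hC β hβk
    interval_cases h : (C β) <;> simp
  rw [← add_div, ← mul_add, h1]
  norm_num

lemma tele (n : ℕ) (hn : 1 ≤ n) :
    ∏ j ∈ Finset.Icc 2 n, ((j : ℚ) / ((j : ℚ) - 1)) = (n : ℚ) := by
  induction n, hn using Nat.le_induction with
  | base => simp
  | succ n hn ih =>
    rw [Finset.prod_Icc_succ_top (by omega), ih]
    have h0 : (n : ℚ) ≠ 0 := by exact_mod_cast Nat.one_le_iff_ne_zero.mp hn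
    push_cast
    field_simp
    simp [h0]

lemma prod_Fone (k n : ℕ) (hn : 1 ≤ n) :
    ∏ j ∈ Finset.Icc 2 n, F k (fun _ => 1) j = (n : ℚ) ^ k := by
  rw [← tele n hn, ← Finset.prod_pow]
  exact Finset.prod_congr rfl fun j hj => F_one k j (Finset.mem_Icc.mp hj).1

lemma fact_pow (k n : ℕ) (hn : 1 ≤ n) :
    ((n - 1).factorial : ℚ) ^ k * (n : ℚ) ^ k = (n.factorial : ℚ) ^ k := by
  rw [← mul_pow]
  congr 1
  obtain ⟨m, rfl⟩ := Nat.exists_eq_add_of_le hn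
  push_cast [Nat.add_sub_cancel_left, Nat.factorial_succ, Nat.add_comm 1 m]
  ring

lemma sum_Ou (k n : ℕ) (hn : 1 ≤ n) (C : ℕ → ℕ) (hC : ∀ β ≤ k, C β ≤ 1) :
    ∑ i ∈ Finset.range n, Ou k C n ((i : ℤ) + 1) = (n.factorial : ℚ) ^ k := by
  have hcard : (Finset.Icc 2 n).card = n - 1 := by rw [Nat.card_Icc]; omega
  have key : ∀ i ∈ Finset.range n, Ou k C n ((i : ℤ) + 1) =
      ((n - 1).factorial : ℚ) ^ k *
        ∑ S ∈ (Finset.Icc 2 n).powersetCard i,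
          (∏ j ∈ S, F k C j) * ∏ j ∈ Finset.Icc 2 n \ S, F k (fun β => 1 - C β) j := by
    intro i hi
    have hi' := Finset.mem_range.mp hi
    rw [Ou, if_pos (by omega)]
    have ht : ((i : ℤ) + 1).toNat - 1 = i := by omega
    rw [ht]
  rw [Finset.sum_congr rfl key, ← Finset.mul_sum]
  have hrange : Finset.range n = Finset.range ((Finset.Icc 2 n).card + 1) := by
    rw [hcard]; congr 1; omega
  rw [hrange, ← Finset.sum_powerset, ← Finset.prod_add,
    Finset.prod_congr rfl (fun j hj => F_add k j C hC), prod_Fone k n hn,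
    fact_pow k n hn]

theorem stmt4 (k n : ℕ) (hk : 1 ≤ k) (hn : 1 ≤ n) :
    Oc k (fun _ => 0) n 0 = (n.factorial : ℚ) ^ k ∧
    Oc k (fun _ => 1) n (n : ℤ) = (n.factorial : ℚ) ^ k ∧
    ∀ C : ℕ → ℕ, (∀ β ≤ k, C β ≤ 1) →
      ∑ m ∈ Finset.range (n + 1), Oc k C n (m : ℤ) = (n.factorial : ℚ) ^ k := by
  have hcard : (Finset.Icc 2 n).card = n - 1 := by rw [Nat.card_Icc]; omega
  refine ⟨?_, ?_, ?_⟩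
  · show Ou k (fun _ => 0) n (0 - (0:ℕ) + 1) = _
    rw [Ou, if_pos (by constructor <;> omega)]
    have : ((0:ℤ) - (0:ℕ) + 1).toNat - 1 = 0 := by decide
    rw [this, Finset.powersetCard_zero, Finset.sum_singleton, Finset.prod_empty,
      Finset.sdiff_empty, one_mul]
    have : ∀ j ∈ Finset.Icc 2 n, F k (fun β => 1 - (0:ℕ)) j = F k (fun _ => 1) j := by
      intro j _; rfl
    rw [Finset.prod_congr rfl this, prod_Fone k n hn, fact_pow k n hn]
  · show Ou k (fun _ => 1) n ((n:ℤ) - (1:ℕ) + 1) = _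
    have h1 : ((n:ℤ) - (1:ℕ) + 1) = (n : ℤ) := by push_cast; ring
    rw [h1, Ou, if_pos (by constructor <;> omega)]
    have h2 : ((n:ℤ)).toNat - 1 = (Finset.Icc 2 n).card := by rw [hcard]; omega
    rw [h2, Finset.powersetCard_self, Finset.sum_singleton, Finset.sdiff_self,
      Finset.prod_empty, mul_one, prod_Fone k n hn, fact_pow k n hn]
  · intro C hC
    have hsum := sum_Ou k n hn C hC
    have hck := hC k le_rfl
    interval_cases h : (C k)
    · -- C k = 0 : terms are Ou (m+1) for m = 0..n ; last is 0
      have hterm : ∀ m ∈ Finset.range (n + 1), Oc k C n (m : ℤ) = Ou k C n ((m : ℤ) + 1) := by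
        intro m _
        rw [Oc, h]; norm_num
      rw [Finset.sum_congr rfl hterm, Finset.sum_range_succ]
      have hz : Ou k C n ((n : ℤ) + 1) = 0 := by
        rw [Ou, if_neg (by omega)]
      rw [hz, add_zero, hsum]
    · -- C k = 1 : terms are Ou m for m = 0..n ; first is 0
      have hterm : ∀ m ∈ Finset.range (n + 1), Oc k C n (m : ℤ) = Ou k C n (m : ℤ) := by
        intro m _
        rw [Oc, h]; norm_num
      rw [Finset.sum_congr rfl hterm]
      rw [Finset.sum_range_succ']
      have hz : Ou k C n ((0 : ℕ) : ℤ) = 0 := by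
        rw [Ou, if_neg (by omega)]
      rw [hz, add_zero, ← hsum]
      refine Finset.sum_congr rfl fun i _ => ?_
      push_cast
      ring_nf
end

section
/- For all n ≥ 1 and 1 ≤ m ≤ n, (n−1)! · ∑_{S ⊆ {2,…,n}, |S| = m−1} ∏_{j∈S} 1/(j−1) = s_u(n, m), where the sum is over all subsets S of {2,…,n} of cardinality m−1. -/
/-- Unsigned Stirling numbers of the first kind. -/
def su : ℕ → ℕ → ℕ
  | 0, 0 => 1
  | 0, _ + 1 => 0
  | _ + 1, 0 => 0
  | n + 1, m + 1 => n * su n (m + 1) + su n m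

lemma E_rec (n k : ℕ) (hn : 1 ≤ n) :
    ∑ S ∈ (Finset.Icc 2 (n+1)).powersetCard (k+1), ∏ j ∈ S, 1 / ((j : ℚ) - 1)
    = (∑ S ∈ (Finset.Icc 2 n).powersetCard (k+1), ∏ j ∈ S, 1 / ((j : ℚ) - 1))
      + (1 / (n : ℚ)) * ∑ S ∈ (Finset.Icc 2 n).powersetCard k, ∏ j ∈ S, 1 / ((j : ℚ) - 1) := by
  have hnot : (n+1) ∉ Finset.Icc 2 n := by simp
  have hins : Finset.Icc 2 (n+1) = insert (n+1) (Finset.Icc 2 n) := by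
    ext x
    simp only [Finset.mem_Icc, Finset.mem_insert]
    omega
  rw [hins, Finset.powersetCard_succ_insert hnot]
  rw [Finset.sum_union]
  · congr 1
    rw [Finset.sum_image]
    · rw [Finset.mul_sum]
      apply Finset.sum_congr rfl
      intro S hS
      have hSnot : (n+1) ∉ S := by
        intro h
        exact hnot ((Finset.mem_powersetCard.mp hS).1 h)
      rw [Finset.prod_insert hSnot]
      push_cast
      ring
    · intro x hx y hy hxy
      have hxn : (n+1) ∉ x := fun h => hnot ((Finset.mem_powersetCard.mp hx).1 h)
      have hyn : (n+1) ∉ y := fun h => hnot ((Finset.mem_powersetCard.mp hy).1 h)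
      rw [← Finset.erase_insert hxn, ← Finset.erase_insert hyn, hxy]
  · rw [Finset.disjoint_left]
    intro S hS hS'
    obtain ⟨T, hT, rfl⟩ := Finset.mem_image.mp hS'
    exact hnot ((Finset.mem_powersetCard.mp hS).1 (Finset.mem_insert_self _ _))

lemma main_aux (N M : ℕ) :
    ((N.factorial : ℚ)) *
        ∑ S ∈ (Finset.Icc 2 (N+1)).powersetCard M, ∏ j ∈ S, 1 / ((j : ℚ) - 1)
      = su (N+1) (M+1) := by
  induction N generalizing M with
  | zero =>
    have : Finset.Icc 2 1 = (∅ : Finset ℕ) := by decide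
    cases M with
    | zero => simp [this, su]
    | succ k =>
      rw [this, Finset.powersetCard_eq_empty.mpr (by simp)]
      simp [su]
  | succ n ih =>
    cases M with
    | zero =>
      simp only [Finset.powersetCard_zero, Finset.sum_singleton, Finset.prod_empty, mul_one]
      show ((n+1).factorial : ℚ) = (su (n+2) 1 : ℚ)
      have : su (n+2) 1 = (n+1) * su (n+1) 1 + su (n+1) 0 := rfl
      rw [this]
      have h0 : su (n+1) 0 = 0 := rfl
      have h1 : ∀ j, su (j+1) 1 = j.factorial := by
        intro j
        induction j with
        | zero => rfl
        | succ i ihj =>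
          show (i+1) * su (i+1) 1 + su (i+1) 0 = _
          rw [ihj, show su (i+1) 0 = 0 from rfl]
          simp [Nat.factorial_succ]
      rw [h1, h0]
      push_cast [Nat.factorial_succ]
      ring
    | succ k =>
      rw [E_rec (n+1) k (by omega)]
      have key : su (n+2) (k+2) = (n+1) * su (n+1) (k+2) + su (n+1) (k+1) := rfl
      rw [key]
      have h1 := ih (k+1)
      have h2 := ih k
      have hne : ((n:ℚ)+1) ≠ 0 := by positivity
      have hfac : (((n+1).factorial : ℕ) : ℚ) = ((n:ℚ)+1) * (n.factorial : ℚ) := by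
        push_cast [Nat.factorial_succ]; ring
      rw [hfac]
      push_cast
      rw [← h1, ← h2]
      field_simp

theorem stmt5 (n m : ℕ) (hn : 1 ≤ n) (hm : 1 ≤ m) (hmn : m ≤ n) :
    ((n - 1).factorial : ℚ) *
        ∑ S ∈ (Finset.Icc 2 n).powersetCard (m - 1), ∏ j ∈ S, 1 / ((j : ℚ) - 1)
      = su n m := by
  obtain ⟨N, rfl⟩ : ∃ N, n = N + 1 := ⟨n - 1, by omega⟩
  obtain ⟨M, rfl⟩ : ∃ M, m = M + 1 := ⟨m - 1, by omega⟩
  simpa using main_aux N M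
end

section
/- Let k ≥ 1, n ≥ 1 and C = (c_0,…,c_k) ∈ {0,1}^{k+1}. Then for every integer m ≥ c_k − 1, O_C(n+1, m+1) = n^k · F_{n+1}(C) · O_C(n, m) + n^k · F_{n+1}(C') · O_C(n, m+1). Moreover O_C(n, m) = 0 for m = c_k − 1 or m > c_k − 1 + n, and O_C(1, c_k) = 1. -/
/-- Auxiliary sum over subsets. -/
def P (k : ℕ) (C : ℕ → ℕ) (n t : ℕ) : ℚ :=
  ∑ S ∈ (Finset.Icc 2 n).powersetCard t,
    (∏ j ∈ S, F k C j) * ∏ j ∈ Finset.Icc 2 n \ S, F k (fun β => 1 - C β) j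

lemma P_zero_of_big (k : ℕ) (C : ℕ → ℕ) (n t : ℕ) (hn : 1 ≤ n) (ht : n ≤ t) : P k C n t = 0 := by
  unfold P
  have h : (Finset.Icc 2 n).card < t := by rw [Nat.card_Icc]; omega
  rw [Finset.powersetCard_eq_empty.2 h, Finset.sum_empty]

lemma Ou_eq (k : ℕ) (C : ℕ → ℕ) (n : ℕ) (hn : 1 ≤ n) (t : ℕ) :
    Ou k C n ((t : ℤ) + 1) = ((n - 1).factorial : ℚ) ^ k * P k C n t := by
  unfold Ou
  by_cases h : (t : ℤ) + 1 ≤ n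
  · rw [if_pos ⟨by omega, h⟩]
    have ht : ((t : ℤ) + 1).toNat - 1 = t := by omega
    rw [ht]; rfl
  · rw [if_neg (by omega)]
    rw [P_zero_of_big k C n t hn (by omega), mul_zero]

lemma P_succ (k : ℕ) (C : ℕ → ℕ) (n t : ℕ) (hn : 1 ≤ n) :
    P k C (n + 1) (t + 1)
      = F k C (n + 1) * P k C n t
        + F k (fun β => 1 - C β) (n + 1) * P k C n (t + 1) := by
  have hx : (n + 1) ∉ Finset.Icc 2 n := by simp
  have hins : Finset.Icc 2 (n + 1) = insert (n + 1) (Finset.Icc 2 n) := by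
    ext j; simp [Finset.mem_Icc, Finset.mem_insert]; omega
  have hdisj : Disjoint ((Finset.Icc 2 n).powersetCard (t + 1))
      (((Finset.Icc 2 n).powersetCard t).image (insert (n + 1))) := by
    rw [Finset.disjoint_left]
    intro S hS hS'
    obtain ⟨T, _, rfl⟩ := Finset.mem_image.1 hS'
    exact hx ((Finset.mem_powersetCard.1 hS).1 (Finset.mem_insert_self _ _))
  have h1 : ∑ S ∈ (Finset.Icc 2 n).powersetCard (t + 1),
      (∏ j ∈ S, F k C j) * ∏ j ∈ insert (n + 1) (Finset.Icc 2 n) \ S, F k (fun β => 1 - C β) j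
      = F k (fun β => 1 - C β) (n + 1) * P k C n (t + 1) := by
    rw [P, Finset.mul_sum]
    refine Finset.sum_congr rfl fun S hS => ?_
    have hSsub := (Finset.mem_powersetCard.1 hS).1
    have hxS : (n + 1) ∉ S := fun h => hx (hSsub h)
    rw [Finset.insert_sdiff_of_notMem _ hxS,
      Finset.prod_insert (by simp : (n + 1) ∉ Finset.Icc 2 n \ S)]
    ring
  have h2 : ∑ S ∈ ((Finset.Icc 2 n).powersetCard t).image (insert (n + 1)),
      (∏ j ∈ S, F k C j) * ∏ j ∈ insert (n + 1) (Finset.Icc 2 n) \ S, F k (fun β => 1 - C β) j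
      = F k C (n + 1) * P k C n t := by
    rw [Finset.sum_image, P, Finset.mul_sum]
    · refine Finset.sum_congr rfl fun S hS => ?_
      have hSsub := (Finset.mem_powersetCard.1 hS).1
      have hxS : (n + 1) ∉ S := fun h => hx (hSsub h)
      have hcompl : insert (n + 1) (Finset.Icc 2 n) \ insert (n + 1) S
          = Finset.Icc 2 n \ S := by
        ext j
        simp only [Finset.mem_sdiff, Finset.mem_insert, not_or]
        constructor
        · rintro ⟨h1 | h1, h2, h3⟩
          · exact absurd h1 h2
          · exact ⟨h1, h3⟩
        · rintro ⟨h1, h2⟩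
          exact ⟨Or.inr h1, fun he => hx (he ▸ h1), h2⟩
      rw [hcompl, Finset.prod_insert hxS]
      ring
    · intro a ha b hb hab
      have hxa : (n + 1) ∉ a := fun h => hx ((Finset.mem_powersetCard.1 ha).1 h)
      have hxb : (n + 1) ∉ b := fun h => hx ((Finset.mem_powersetCard.1 hb).1 h)
      have := congrArg (fun s => Finset.erase s (n + 1)) hab
      simpa [Finset.erase_insert hxa, Finset.erase_insert hxb] using this
  conv_lhs => rw [P, hins]
  rw [Finset.powersetCard_succ_insert hx, Finset.sum_union hdisj, h1, h2]
  ring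

lemma P_zero_succ (k : ℕ) (C : ℕ → ℕ) (n : ℕ) (hn : 1 ≤ n) :
    P k C (n + 1) 0 = F k (fun β => 1 - C β) (n + 1) * P k C n 0 := by
  have hx : (n + 1) ∉ Finset.Icc 2 n := by simp
  have hins : Finset.Icc 2 (n + 1) = insert (n + 1) (Finset.Icc 2 n) := by
    ext j; simp [Finset.mem_Icc, Finset.mem_insert]; omega
  simp only [P, Finset.powersetCard_zero, Finset.sum_singleton, Finset.prod_empty,
    Finset.sdiff_empty, one_mul, hins, Finset.prod_insert hx]

lemma Ou_zero (k : ℕ) (C : ℕ → ℕ) (n : ℕ) : Ou k C n (0 : ℤ) = 0 := by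
  unfold Ou; rw [if_neg (by omega)]

lemma Ou_rec (k : ℕ) (C : ℕ → ℕ) (n : ℕ) (hn : 1 ≤ n) (t : ℕ) :
    Ou k C (n + 1) ((t : ℤ) + 1)
      = (n : ℚ) ^ k * F k C (n + 1) * Ou k C n (t : ℤ)
        + (n : ℚ) ^ k * F k (fun β => 1 - C β) (n + 1) * Ou k C n ((t : ℤ) + 1) := by
  have hfact : (n.factorial : ℚ) = (n : ℚ) * ((n - 1).factorial : ℚ) := by
    have h := Nat.mul_factorial_pred (by omega : n ≠ 0)
    exact_mod_cast h.symm
  cases t with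
  | zero =>
    have h1 := Ou_eq k C (n + 1) (by omega) 0
    have h2 := Ou_eq k C n hn 0
    push_cast at h1 h2 ⊢
    rw [h1, h2, Ou_zero, P_zero_succ k C n hn, hfact, mul_pow]
    ring
  | succ u =>
    have h1 := Ou_eq k C (n + 1) (by omega) (u + 1)
    have h2 := Ou_eq k C n hn u
    have h3 := Ou_eq k C n hn (u + 1)
    push_cast at h1 h2 h3 ⊢
    rw [h1, h2, h3, P_succ k C n u hn, hfact, mul_pow]
    ring

theorem stmt7 (k n : ℕ) (hk : 1 ≤ k) (hn : 1 ≤ n) (C : ℕ → ℕ) (hC : ∀ β ≤ k, C β ≤ 1) :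
    (∀ m : ℤ, (C k : ℤ) - 1 ≤ m →
      Oc k C (n + 1) (m + 1)
        = (n : ℚ) ^ k * F k C (n + 1) * Oc k C n m
          + (n : ℚ) ^ k * F k (fun β => 1 - C β) (n + 1) * Oc k C n (m + 1)) ∧
    (∀ m : ℤ, (m = (C k : ℤ) - 1 ∨ (C k : ℤ) - 1 + n < m) → Oc k C n m = 0) ∧
    Oc k C 1 (C k : ℤ) = 1 := by
  refine ⟨?_, ?_, ?_⟩
  · intro m hm
    set t : ℕ := (m - (C k : ℤ) + 1).toNat with ht
    have htt : m - (C k : ℤ) + 1 = (t : ℤ) := by omega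
    have e1 : m + 1 - (C k : ℤ) + 1 = (t : ℤ) + 1 := by omega
    unfold Oc
    rw [e1, htt, Ou_rec k C n hn t]
  · intro m hm
    unfold Oc Ou
    rcases hm with h | h
    · rw [if_neg (by omega)]
    · rw [if_neg (by omega)]
  · unfold Oc Ou
    have e : ((C k : ℤ) - (C k : ℤ) + 1) = 1 := by omega
    rw [e, if_pos ⟨le_refl _, by norm_num⟩]
    have : Finset.Icc 2 1 = (∅ : Finset ℕ) := by
      apply Finset.Icc_eq_empty; omega
    simp [this]
end

section
/- Let k ≥ 1, n ≥ 2, C = (c_0,…,c_k) ∈ {0,1}^{k+1}, and 1 ≤ m ≤ n. Then O^u_C(n, m) ≤ ((n−1)!^k / (m−1)!) · (∑_{j=2}^{n} F_j(C))^{m−1} · ∏_{i=1}^{n−m} F_{i+1}(C'). -/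
section Aux
open Finset

lemma pow_add_ge (a b : ℚ) (ha : 0 ≤ a) (hb : 0 ≤ b) (r : ℕ) :
    b ^ r + r * a * b ^ (r - 1) ≤ (a + b) ^ r := by
  induction r with
  | zero => simp
  | succ r ih =>
    rcases Nat.eq_zero_or_pos r with h0 | hr
    · subst h0; simp; linarith
    · obtain ⟨r', rfl⟩ : ∃ r', r = r' + 1 := ⟨r - 1, by omega⟩
      simp only [Nat.add_sub_cancel] at ih ⊢
      have key : (a + b) ^ (r' + 1) * (a + b) = (a + b) ^ (r' + 2) := by
        rw [← pow_succ]
      have h2 : (b ^ (r'+1) + (↑(r'+1)) * a * b ^ r') * (a + b) ≤ (a+b)^(r'+1) * (a+b) := by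
        apply mul_le_mul_of_nonneg_right ih (by linarith)
      have hterm : (0:ℚ) ≤ ((r':ℚ)+1) * (a*a*b^r') := by positivity
      have e1 : b ^ (r'+1) = b ^ r' * b := pow_succ b r'
      have e2 : b ^ (r'+1+1) = b ^ (r'+1) * b := pow_succ b (r'+1)
      push_cast at h2 ⊢
      calc b ^ (r'+1+1) + ((r':ℚ)+1+1)*a*b^(r'+1)
          ≤ (b ^ (r'+1) + ((r':ℚ)+1) * a * b ^ r') * (a + b) := by
            rw [e2, e1]; nlinarith [hterm]
        _ ≤ (a+b)^(r'+1) * (a+b) := h2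
        _ = (a+b)^(r'+1+1) := key

lemma esymm_nonneg (x : ℕ → ℚ) (s : Finset ℕ) (hx : ∀ i ∈ s, 0 ≤ x i) (r : ℕ) :
    0 ≤ ∑ S ∈ s.powersetCard r, ∏ j ∈ S, x j := by
  apply Finset.sum_nonneg
  intro S hS
  exact Finset.prod_nonneg fun j hj => hx j ((Finset.mem_powersetCard.mp hS).1 hj)

lemma esymm_le (x : ℕ → ℚ) (s : Finset ℕ) (hx : ∀ i ∈ s, 0 ≤ x i) (r : ℕ) :
    (r.factorial : ℚ) * ∑ S ∈ s.powersetCard r, ∏ j ∈ S, x j ≤ (∑ j ∈ s, x j) ^ r := by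
  induction s using Finset.induction generalizing r with
  | empty =>
    cases r with
    | zero => simp
    | succ r =>
      rw [Finset.powersetCard_eq_empty.mpr (by simp)]
      simp
  | @insert a s ha ih =>
    have hx' : ∀ i ∈ s, 0 ≤ x i := fun i hi => hx i (Finset.mem_insert_of_mem hi)
    have hxa : 0 ≤ x a := hx a (Finset.mem_insert_self a s)
    cases r with
    | zero => simp
    | succ r =>
      rw [Finset.powersetCard_succ_insert ha]
      have hdisj : Disjoint (s.powersetCard (r+1)) ((s.powersetCard r).image (insert a)) := by
        rw [Finset.disjoint_left]
        intro S hS hS'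
        obtain ⟨S', hS', rfl⟩ := Finset.mem_image.mp hS'
        exact ha ((Finset.mem_powersetCard.mp hS).1 (Finset.mem_insert_self a S'))
      rw [Finset.sum_union hdisj]
      have himg : ∑ S ∈ (s.powersetCard r).image (insert a), ∏ j ∈ S, x j
          = x a * ∑ S ∈ s.powersetCard r, ∏ j ∈ S, x j := by
        rw [Finset.sum_image, Finset.mul_sum]
        · apply Finset.sum_congr rfl
          intro S hS
          rw [Finset.prod_insert (fun h => ha ((Finset.mem_powersetCard.mp hS).1 h))]
        · intro S hS S' hS' h
          have h1 : a ∉ S := fun h' => ha ((Finset.mem_powersetCard.mp hS).1 h')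
          have h2 : a ∉ S' := fun h' => ha ((Finset.mem_powersetCard.mp hS').1 h')
          rw [← Finset.erase_insert h1, h, Finset.erase_insert h2]
      rw [himg, Finset.sum_insert ha]
      have hT : 0 ≤ ∑ j ∈ s, x j := Finset.sum_nonneg hx'
      have h1 := ih hx' (r+1)
      have h2 := ih hx' r
      have key := pow_add_ge (x a) (∑ j ∈ s, x j) hxa hT (r+1)
      simp only [Nat.add_sub_cancel] at key
      have hfact : (((r+1).factorial : ℕ) : ℚ) = ((r:ℚ)+1) * (r.factorial : ℚ) := by
        push_cast [Nat.factorial_succ]; ring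
      have h3 : ((r:ℚ)+1) * x a * ((r.factorial:ℚ) * ∑ S ∈ s.powersetCard r, ∏ j ∈ S, x j)
          ≤ ((r:ℚ)+1) * x a * (∑ j ∈ s, x j) ^ r :=
        mul_le_mul_of_nonneg_left h2 (by positivity)
      rw [hfact] at h1 ⊢
      push_cast at key ⊢
      nlinarith [h1, h3, key]

lemma F_nonneg (k : ℕ) (C : ℕ → ℕ) {j : ℕ} (hj : 2 ≤ j) : 0 ≤ F k C j := by
  apply Finset.sum_nonneg
  intro β _
  have h1 : (2:ℚ) ≤ (j:ℚ) := by exact_mod_cast hj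
  have h2 : (0:ℚ) ≤ (j:ℚ) - 1 := by linarith
  positivity

lemma F_anti (k : ℕ) (C : ℕ → ℕ) {j j' : ℕ} (hj : 2 ≤ j) (hjj : j ≤ j') :
    F k C j' ≤ F k C j := by
  apply Finset.sum_le_sum
  intro β _
  have h1 : (2:ℚ) ≤ (j:ℚ) := by exact_mod_cast hj
  have h2 : (j:ℚ) ≤ (j':ℚ) := by exact_mod_cast hjj
  apply div_le_div_of_nonneg_left (by positivity) (pow_pos (by linarith) β)
  exact pow_le_pow_left₀ (by linarith) (by linarith) β

lemma prod_anti_bound (g : ℕ → ℚ) (hg0 : ∀ j, 2 ≤ j → 0 ≤ g j)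
    (hganti : ∀ j j', 2 ≤ j → j ≤ j' → g j' ≤ g j) :
    ∀ (t : ℕ) (T : Finset ℕ), (∀ j ∈ T, 2 ≤ j) → T.card = t →
      ∏ j ∈ T, g j ≤ ∏ j ∈ Finset.Icc 2 (t + 1), g j := by
  intro t
  induction t with
  | zero =>
    intro T hT hcard
    rw [Finset.card_eq_zero.mp hcard]
    simp
  | succ t ih =>
    intro T hT hcard
    have hne : T.Nonempty := Finset.card_pos.mp (by omega)
    set M := T.max' hne with hMdef
    have hM : M ∈ T := T.max'_mem hne
    have hM2 : 2 ≤ M := hT M hM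
    have hsub : T ⊆ Finset.Icc 2 M := fun j hj =>
      Finset.mem_Icc.mpr ⟨hT j hj, T.le_max' j hj⟩
    have hcard2 : t + 1 ≤ M - 1 := by
      have := Finset.card_le_card hsub
      rw [Nat.card_Icc] at this
      omega
    have hMge : t + 2 ≤ M := by omega
    have hIcc : Finset.Icc 2 (t + 2) = insert (t + 2) (Finset.Icc 2 (t + 1)) := by
      exact (Finset.insert_Icc_right_eq_Icc_add_one (a := 2) (b := t + 1) (by omega)).symm
    have herase : ∀ j ∈ T.erase M, 2 ≤ j := fun j hj => hT j (Finset.mem_of_mem_erase hj)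
    have hcarde : (T.erase M).card = t := by rw [Finset.card_erase_of_mem hM]; omega
    calc ∏ j ∈ T, g j = g M * ∏ j ∈ T.erase M, g j := (Finset.mul_prod_erase T g hM).symm
      _ ≤ g (t + 2) * ∏ j ∈ Finset.Icc 2 (t + 1), g j := by
          apply mul_le_mul (hganti (t+2) M (by omega) hMge) (ih _ herase hcarde)
            (Finset.prod_nonneg fun j hj => hg0 j (herase j hj))
            (hg0 (t+2) (by omega))
      _ = ∏ j ∈ Finset.Icc 2 (t + 1 + 1), g j := by
          rw [hIcc, Finset.prod_insert (by simp)]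

end Aux

theorem stmt10 (k n m : ℕ) (hk : 1 ≤ k) (hn : 2 ≤ n) (hm : 1 ≤ m) (hmn : m ≤ n)
    (C : ℕ → ℕ) (hC : ∀ β ≤ k, C β ≤ 1) :
    Ou k C n (m : ℤ)
      ≤ ((n - 1).factorial : ℚ) ^ k / ((m - 1).factorial : ℚ)
          * (∑ j ∈ Finset.Icc 2 n, F k C j) ^ (m - 1)
          * ∏ i ∈ Finset.Icc 1 (n - m), F k (fun β => 1 - C β) (i + 1) := by
  have hcond : (1:ℤ) ≤ (m:ℤ) ∧ (m:ℤ) ≤ (n:ℤ) := ⟨by exact_mod_cast hm, by exact_mod_cast hmn⟩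
  rw [Ou, if_pos hcond, Int.toNat_natCast]
  have hP : ∏ i ∈ Finset.Icc 1 (n - m), F k (fun β => 1 - C β) (i + 1)
      = ∏ j ∈ Finset.Icc 2 (n - m + 1), F k (fun β => 1 - C β) j := by
    rw [show Finset.Icc 2 (n - m + 1) = (Finset.Icc 1 (n - m)).image (· + 1) by
      rw [Finset.image_add_right_Icc]]
    rw [Finset.prod_image (by intro x _ y _ h; simp only at h; omega)]
  rw [hP]
  have hP0 : 0 ≤ ∏ j ∈ Finset.Icc 2 (n - m + 1), F k (fun β => 1 - C β) j :=
    Finset.prod_nonneg fun j hj => F_nonneg _ _ (Finset.mem_Icc.mp hj).1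
  have hterm : ∀ S ∈ (Finset.Icc 2 n).powersetCard (m - 1),
      (∏ j ∈ S, F k C j) * ∏ j ∈ Finset.Icc 2 n \ S, F k (fun β => 1 - C β) j
      ≤ (∏ j ∈ S, F k C j) * ∏ j ∈ Finset.Icc 2 (n - m + 1), F k (fun β => 1 - C β) j := by
    intro S hS
    obtain ⟨hSsub, hScard⟩ := Finset.mem_powersetCard.mp hS
    have hA0 : 0 ≤ ∏ j ∈ S, F k C j :=
      Finset.prod_nonneg fun j hj => F_nonneg _ _ (Finset.mem_Icc.mp (hSsub hj)).1
    apply mul_le_mul_of_nonneg_left _ hA0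
    apply prod_anti_bound _ (fun j hj => F_nonneg _ _ hj)
      (fun j j' h h' => F_anti _ _ h h') (n - m)
    · intro j hj
      exact (Finset.mem_Icc.mp (Finset.mem_sdiff.mp hj).1).1
    · rw [Finset.card_sdiff_of_subset hSsub, Nat.card_Icc, hScard]
      omega
  have hsum := Finset.sum_le_sum hterm
  rw [← Finset.sum_mul] at hsum
  have hE := esymm_le (F k C) (Finset.Icc 2 n)
    (fun i hi => F_nonneg _ _ (Finset.mem_Icc.mp hi).1) (m - 1)
  have hfpos : (0:ℚ) < ((m-1).factorial : ℚ) := by positivity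
  have hEdiv : ∑ S ∈ (Finset.Icc 2 n).powersetCard (m - 1), ∏ j ∈ S, F k C j
      ≤ (∑ j ∈ Finset.Icc 2 n, F k C j) ^ (m - 1) / ((m-1).factorial : ℚ) := by
    rw [le_div_iff₀ hfpos]
    linarith [hE]
  have hN : (0:ℚ) ≤ ((n - 1).factorial : ℚ) ^ k := by positivity
  calc ((n - 1).factorial : ℚ) ^ k *
        ∑ S ∈ (Finset.Icc 2 n).powersetCard (m - 1),
          (∏ j ∈ S, F k C j) * ∏ j ∈ Finset.Icc 2 n \ S, F k (fun β => 1 - C β) j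
      ≤ ((n - 1).factorial : ℚ) ^ k *
        ((∑ S ∈ (Finset.Icc 2 n).powersetCard (m - 1), ∏ j ∈ S, F k C j) *
          ∏ j ∈ Finset.Icc 2 (n - m + 1), F k (fun β => 1 - C β) j) :=
        mul_le_mul_of_nonneg_left hsum hN
    _ ≤ ((n - 1).factorial : ℚ) ^ k *
        (((∑ j ∈ Finset.Icc 2 n, F k C j) ^ (m - 1) / ((m-1).factorial : ℚ)) *
          ∏ j ∈ Finset.Icc 2 (n - m + 1), F k (fun β => 1 - C β) j) :=
        mul_le_mul_of_nonneg_left (mul_le_mul_of_nonneg_right hEdiv hP0) hN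
    _ = ((n - 1).factorial : ℚ) ^ k / ((m - 1).factorial : ℚ)
          * (∑ j ∈ Finset.Icc 2 n, F k C j) ^ (m - 1)
          * ∏ j ∈ Finset.Icc 2 (n - m + 1), F k (fun β => 1 - C β) j := by
        ring
end

section
/- For all n ≥ 2 and 1 ≤ m ≤ n, s_u(n, m) ≤ ((n−1)!/(m−1)!) · H(n−1)^{m−1}, where H(n) = ∑_{i=1}^{n} 1/i denotes the n-th harmonic number. -/
/-- The `n`-th harmonic number. -/
def H (n : ℕ) : ℚ := ∑ i ∈ Finset.Icc 1 n, (1 : ℚ) / i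

lemma su_eq_zero_of_lt : ∀ n m : ℕ, n < m → su n m = 0 := by
  intro n
  induction n with
  | zero => intro m hm; obtain ⟨m', rfl⟩ := Nat.exists_eq_add_of_lt hm; rfl
  | succ n ih =>
    intro m hm
    obtain ⟨m', rfl⟩ : ∃ m', m = m' + 1 := ⟨m - 1, by omega⟩
    show n * su n (m' + 1) + su n m' = 0
    rw [ih (m' + 1) (by omega), ih m' (by omega), Nat.mul_zero]

lemma su_self : ∀ n : ℕ, su n n = 1 := by
  intro n
  induction n with
  | zero => rfl
  | succ n ih =>
    show n * su n (n + 1) + su n n = 1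
    rw [su_eq_zero_of_lt n (n + 1) (by omega), ih, Nat.mul_zero]

lemma su_one : ∀ n : ℕ, su (n + 1) 1 = n.factorial := by
  intro n
  induction n with
  | zero => rfl
  | succ n ih =>
    show (n + 1) * su (n + 1) 1 + su (n + 1) 0 = (n + 1).factorial
    rw [ih]
    show (n + 1) * n.factorial + 0 = (n + 1).factorial
    rw [Nat.factorial_succ]; ring

lemma H_nonneg (n : ℕ) : 0 ≤ H n := by
  unfold H; positivity

lemma H_succ (n : ℕ) : H (n + 1) = H n + 1 / (n + 1) := by
  unfold H
  rw [Finset.sum_Icc_succ_top (by omega)]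
  push_cast; ring

lemma H_one_le (n : ℕ) (hn : 1 ≤ n) : 1 ≤ H n := by
  obtain ⟨p, rfl⟩ : ∃ p, n = p + 1 := ⟨n - 1, by omega⟩
  clear hn
  induction p with
  | zero => simp [H]
  | succ p ih =>
    rw [H_succ]
    have : (0:ℚ) ≤ 1 / ((p:ℚ) + 1 + 1) := by positivity
    push_cast
    linarith

lemma binom_lb (a b : ℚ) (ha : 0 ≤ a) (hb : 0 ≤ b) :
    ∀ k : ℕ, a ^ (k + 1) + (k + 1) * a ^ k * b ≤ (a + b) ^ (k + 1) := by
  intro k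
  induction k with
  | zero => simp
  | succ k ih =>
    have h2 : 0 ≤ a + b := by linarith
    have h3 : (a + b) * (a ^ (k + 1) + (k + 1) * a ^ k * b) ≤ (a + b) * (a + b) ^ (k + 1) :=
      mul_le_mul_of_nonneg_left ih h2
    have h4 : 0 ≤ a ^ k := by positivity
    have e1 : a ^ (k + 1) = a ^ k * a := pow_succ a k
    have e2 : a ^ (k + 1 + 1) = a ^ k * a * a := by rw [pow_succ, e1]
    have e3 : (a + b) ^ (k + 1 + 1) = (a + b) * (a + b) ^ (k + 1) := by ring
    rw [e1] at h3
    rw [e2, e1, e3]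
    push_cast
    nlinarith [mul_nonneg (mul_nonneg h4 hb) hb]

lemma su_main : ∀ n m : ℕ, m ≤ n →
    (su (n + 1) (m + 1) : ℚ) ≤ (n.factorial : ℚ) / (m.factorial : ℚ) * H n ^ m := by
  intro n
  induction n with
  | zero =>
    intro m hm
    interval_cases m
    simp [su_self 1, Nat.factorial]
  | succ n ih =>
    intro m hm
    match m with
    | 0 =>
      rw [su_one (n + 1)]
      simp [Nat.factorial]
    | k + 1 =>
      by_cases hk : k + 1 = n + 1
      · obtain rfl : k = n := by omega
        have hsu : su (k + 2) (k + 2) = 1 := su_self (k + 2)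
        rw [hsu]
        have h1 : ((k + 1).factorial : ℚ) / ((k + 1).factorial : ℚ) = 1 := by
          rw [div_self]; positivity
        rw [h1, one_mul]
        push_cast
        exact one_le_pow₀ (H_one_le (k + 1) (by omega))
      · have hkn : k + 1 ≤ n := by omega
        set a := H n with ha_def
        set b := (1 : ℚ) / (n + 1) with hb_def
        have hH : H (n + 1) = a + b := H_succ n
        have hb0 : 0 ≤ b := by positivity
        have hbin := binom_lb a b (H_nonneg n) hb0 k
        have ih1 := ih (k + 1) hkn
        have ih2 := ih k (by omega)
        have hfk : ((k + 1).factorial : ℚ) = (k + 1) * k.factorial := by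
          rw [Nat.factorial_succ]; push_cast; ring
        have hfn : ((n + 1).factorial : ℚ) = (n + 1) * n.factorial := by
          rw [Nat.factorial_succ]; push_cast; ring
        have hkf : (k.factorial : ℚ) ≠ 0 := by positivity
        have hn1 : ((n : ℚ) + 1) ≠ 0 := by positivity
        calc (su (n + 2) (k + 2) : ℚ)
            = (n + 1) * su (n + 1) (k + 2) + su (n + 1) (k + 1) := by
              have hsu : su (n + 2) (k + 2)
                  = (n + 1) * su (n + 1) (k + 2) + su (n + 1) (k + 1) := rfl
              rw [hsu]; push_cast; ring
          _ ≤ (n + 1) * ((n.factorial : ℚ) / ((k + 1).factorial : ℚ) * a ^ (k + 1))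
              + (n.factorial : ℚ) / (k.factorial : ℚ) * a ^ k := by
              gcongr
          _ = ((n + 1).factorial : ℚ) / ((k + 1).factorial : ℚ)
              * (a ^ (k + 1) + (k + 1) * a ^ k * b) := by
              rw [hfk, hfn, hb_def]
              field_simp
          _ ≤ ((n + 1).factorial : ℚ) / ((k + 1).factorial : ℚ) * (a + b) ^ (k + 1) := by
              gcongr
          _ = ((n + 1).factorial : ℚ) / ((k + 1).factorial : ℚ) * H (n + 1) ^ (k + 1) := by
              rw [hH]

theorem stmt11 (n m : ℕ) (hn : 2 ≤ n) (hm : 1 ≤ m) (hmn : m ≤ n) :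
    (su n m : ℚ)
      ≤ ((n - 1).factorial : ℚ) / ((m - 1).factorial : ℚ) * H (n - 1) ^ (m - 1) := by
  obtain ⟨n', rfl⟩ : ∃ n', n = n' + 1 := ⟨n - 1, by omega⟩
  obtain ⟨m', rfl⟩ : ∃ m', m = m' + 1 := ⟨m - 1, by omega⟩
  simpa using su_main n' m' (by omega)
end

section
/- Let n ≥ 2 and let M_1 be a positive integer, and set M = ⌈e·H(n−1)⌉ + M_1. Then ∑_{m=M+1}^{n} s_u(n, m) ≤ n! · exp(−M_1). In particular, the proportion of permutations of {1,…,n} whose number of left-to-right minima exceeds M is at most exp(−M_1), so the unsigned Stirling numbers of the first kind are concentrated on m = O(log n). -/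
open Finset Equiv

/-- Number of left-to-right minima of a permutation. -/
def lmin {n : ℕ} (σ : Equiv.Perm (Fin n)) : ℕ :=
  (Finset.univ.filter (fun i : Fin n => ∀ j : Fin n, j < i → σ i < σ j)).card

/-- Build a permutation of `Fin (n+1)` from its last value `v` and the order pattern `τ`
of the remaining entries. -/
def permG {n : ℕ} (v : Fin (n + 1)) (τ : Equiv.Perm (Fin n)) : Equiv.Perm (Fin (n + 1)) :=
  (finSuccEquiv' (Fin.last n)).trans (τ.optionCongr.trans (finSuccEquiv' v).symm)

lemma permG_last {n : ℕ} (v : Fin (n + 1)) (τ : Equiv.Perm (Fin n)) :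
    permG v τ (Fin.last n) = v := by
  simp [permG, finSuccEquiv'_at, finSuccEquiv'_symm_none]

lemma permG_castSucc {n : ℕ} (v : Fin (n + 1)) (τ : Equiv.Perm (Fin n)) (i : Fin n) :
    permG v τ (Fin.castSucc i) = v.succAbove (τ i) := by
  have h : finSuccEquiv' (Fin.last n) (Fin.castSucc i) = some i := by
    rw [← Fin.succAbove_last]
    exact finSuccEquiv'_succAbove _ _
  simp only [permG, Equiv.trans_apply, h, Equiv.optionCongr_apply, Option.map_some,
    finSuccEquiv'_symm_some]

lemma lmin_permG {n : ℕ} (v : Fin (n + 1)) (τ : Equiv.Perm (Fin n)) :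
    lmin (permG v τ) = lmin τ + (if v = 0 then 1 else 0) := by
  classical
  rw [lmin, lmin, Finset.card_filter, Finset.card_filter, Fin.sum_univ_castSucc]
  congr 1
  · apply Finset.sum_congr rfl
    intro i _
    congr 1
    apply propext
    constructor
    · intro h j hj
      have := h (Fin.castSucc j) (Fin.castSucc_lt_castSucc_iff.mpr hj)
      rw [permG_castSucc, permG_castSucc] at this
      exact Fin.succAbove_lt_succAbove_iff.mp this
    · intro h j hj
      have hjne : j ≠ Fin.last n := (lt_trans hj (Fin.castSucc_lt_last i)).ne
      obtain ⟨j', rfl⟩ : ∃ j', Fin.castSucc j' = j :=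
        ⟨j.castPred hjne, Fin.castSucc_castPred j hjne⟩
      rw [permG_castSucc, permG_castSucc]
      exact Fin.succAbove_lt_succAbove_iff.mpr (h j' (Fin.castSucc_lt_castSucc_iff.mp hj))
  · by_cases hv : v = 0
    · subst hv
      rw [if_pos rfl, if_pos]
      intro j hj
      have hjne : j ≠ Fin.last n := hj.ne
      obtain ⟨j', rfl⟩ : ∃ j', Fin.castSucc j' = j :=
        ⟨j.castPred hjne, Fin.castSucc_castPred j hjne⟩
      rw [permG_last, permG_castSucc]
      simp [Fin.succAbove_zero, Fin.succ_pos]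
    · rw [if_neg hv, if_neg]
      intro hcon
      have hvpos : 0 < v := Fin.pos_of_ne_zero hv
      have hn : 0 < n := by
        have h1 : 1 ≤ v.val := hvpos
        have h2 : v.val ≤ n := Fin.is_le v
        omega
      set z : Fin n := ⟨0, hn⟩ with hz
      have hz0 : v.succAbove z = 0 := by
        rw [Fin.succAbove_of_castSucc_lt]
        · exact Fin.ext (by simp [hz])
        · exact lt_of_le_of_lt (by simp [hz, Fin.le_def]) hvpos
      have := hcon (Fin.castSucc (τ.symm z)) (Fin.castSucc_lt_last _)
      rw [permG_last, permG_castSucc] at this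
      simp only [Equiv.apply_symm_apply, hz0] at this
      exact absurd this (by simp)
      
lemma permG_bij {n : ℕ} :
    Function.Bijective (fun p : Fin (n + 1) × Equiv.Perm (Fin n) => permG p.1 p.2) := by
  rw [Fintype.bijective_iff_injective_and_card]
  constructor
  · rintro ⟨v, τ⟩ ⟨w, ρ⟩ h
    simp only at h
    have hv : v = w := by
      have := congrArg (fun σ => σ (Fin.last n)) h
      simpa [permG_last] using this
    subst hv
    have hτ : τ = ρ := by
      apply Equiv.ext
      intro i
      have := congrArg (fun σ => σ (Fin.castSucc i)) h
      simp only [permG_castSucc] at this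
      exact Fin.succAbove_right_injective this
    rw [hτ]
  · simp [Fintype.card_perm, Nat.factorial_succ]

lemma perm_sum (x : ℝ) (n : ℕ) :
    ∑ σ : Equiv.Perm (Fin n), x ^ lmin σ = ∏ k ∈ Finset.range n, (x + k) := by
  induction n with
  | zero =>
    have hl : ∀ σ : Equiv.Perm (Fin 0), lmin σ = 0 := fun σ =>
      Nat.eq_zero_of_le_zero (le_trans (Finset.card_filter_le _ _) (by simp))
    simp [hl]
  | succ n ih =>
    have hb := Fintype.sum_bijective _ (permG_bij (n := n))
      (fun p : Fin (n + 1) × Equiv.Perm (Fin n) => x ^ lmin (permG p.1 p.2))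
      (fun σ => x ^ lmin σ) (fun p => rfl)
    rw [← hb]
    calc ∑ p : Fin (n + 1) × Equiv.Perm (Fin n), x ^ lmin (permG p.1 p.2)
        = ∑ v : Fin (n + 1), ∑ τ : Equiv.Perm (Fin n),
            x ^ (if v = 0 then 1 else 0) * x ^ lmin τ := by
          rw [Fintype.sum_prod_type]
          exact Finset.sum_congr rfl fun v _ => Finset.sum_congr rfl fun τ _ => by
            rw [lmin_permG, pow_add, mul_comm]
      _ = (∑ v : Fin (n + 1), x ^ (if v = 0 then 1 else 0)) *
            ∑ τ : Equiv.Perm (Fin n), x ^ lmin τ := by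
          rw [Finset.sum_mul]
          exact Finset.sum_congr rfl fun v _ => by rw [Finset.mul_sum]
      _ = (x + n) * ∏ k ∈ Finset.range n, (x + k) := by
          rw [ih]
          congr 1
          rw [Fin.sum_univ_succ]
          simp [Fin.succ_ne_zero]
      _ = ∏ k ∈ Finset.range (n + 1), (x + k) := by
          rw [Finset.prod_range_succ]
          ring

lemma su_eq_zero : ∀ (n m : ℕ), n < m → su n m = 0
  | n, 0, h => absurd h (Nat.not_lt_zero n)
  | 0, m + 1, _ => rfl
  | n + 1, m + 1, h => by
    rw [su, su_eq_zero n (m + 1) (by omega), su_eq_zero n m (by omega)]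
    simp

lemma su_sum (x : ℝ) (n : ℕ) :
    ∑ m ∈ Finset.range (n + 1), (su n m : ℝ) * x ^ m = ∏ k ∈ Finset.range n, (x + k) := by
  induction n with
  | zero => simp [su]
  | succ n ih =>
    have h1 : ∑ m ∈ Finset.range (n + 1), (su n (m + 1) : ℝ) * x ^ (m + 1)
        = (∑ m ∈ Finset.range (n + 1), (su n m : ℝ) * x ^ m) - (su n 0 : ℝ) := by
      have ha := Finset.sum_range_succ' (fun m => (su n m : ℝ) * x ^ m) (n + 1)
      have hb := Finset.sum_range_succ (fun m => (su n m : ℝ) * x ^ m) (n + 1)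
      rw [su_eq_zero n (n + 1) (Nat.lt_succ_self n)] at hb
      simp only [Nat.cast_zero, zero_mul, add_zero, pow_zero, mul_one] at ha hb
      rw [hb] at ha
      linarith
    calc ∑ m ∈ Finset.range (n + 1 + 1), (su (n + 1) m : ℝ) * x ^ m
        = ∑ m ∈ Finset.range (n + 1), (su (n + 1) (m + 1) : ℝ) * x ^ (m + 1) := by
          rw [Finset.sum_range_succ' (fun m => (su (n + 1) m : ℝ) * x ^ m) (n + 1)]
          simp [su]
      _ = ∑ m ∈ Finset.range (n + 1),
            ((n : ℝ) * ((su n (m + 1) : ℝ) * x ^ (m + 1)) + x * ((su n m : ℝ) * x ^ m)) := by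
          apply Finset.sum_congr rfl
          intro m _
          rw [su]
          push_cast
          ring
      _ = (n : ℝ) * (∑ m ∈ Finset.range (n + 1), (su n (m + 1) : ℝ) * x ^ (m + 1)) +
            x * ∑ m ∈ Finset.range (n + 1), (su n m : ℝ) * x ^ m := by
          rw [Finset.sum_add_distrib, Finset.mul_sum, Finset.mul_sum]
      _ = (n : ℝ) * ((∏ k ∈ Finset.range n, (x + k)) - (su n 0 : ℝ)) +
            x * ∏ k ∈ Finset.range n, (x + k) := by rw [h1, ih]
      _ = ∏ k ∈ Finset.range (n + 1), (x + k) := by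
          have h0 : (n : ℝ) * (su n 0 : ℝ) = 0 := by
            cases n with
            | zero => simp
            | succ k => simp [su]
          rw [mul_sub, h0, sub_zero, Finset.prod_range_succ]
          ring

theorem stmt15 (n : ℕ) (hn : 2 ≤ n) (M₁ : ℕ) (hM₁ : 1 ≤ M₁) (M : ℕ)
    (hM : M = ⌈Real.exp 1 * ((H (n - 1) : ℚ) : ℝ)⌉₊ + M₁) :
    ((∑ m ∈ Finset.Icc (M + 1) n, su n m : ℕ) : ℝ)
        ≤ (n.factorial : ℝ) * Real.exp (-(M₁ : ℝ)) ∧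
      (Nat.card {σ : Equiv.Perm (Fin n) //
          M < (Finset.univ.filter
            (fun i : Fin n => ∀ j : Fin n, j < i → σ i < σ j)).card} : ℝ)
        ≤ (n.factorial : ℝ) * Real.exp (-(M₁ : ℝ)) := by
  classical
  set e := Real.exp 1 with he
  have he1 : (1 : ℝ) ≤ e := Real.one_le_exp (by norm_num)
  have hepos : (0 : ℝ) < e := lt_of_lt_of_le one_pos he1
  obtain ⟨k, hk⟩ : ∃ k, n = k + 1 := ⟨n - 1, by omega⟩
  have hn1 : n - 1 = k := by omega
  have hH : ((H k : ℚ) : ℝ) = ∑ j ∈ Finset.range k, (1 : ℝ) / (j + 1) := by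
    rw [H]
    push_cast
    rw [← Finset.Ico_add_one_right_eq_Icc, Finset.sum_Ico_eq_sum_range]
    simp [add_comm]
  -- key product bound
  have hprod : ∏ j ∈ Finset.range n, (e + j)
      ≤ (n.factorial : ℝ) * Real.exp (-(M₁ : ℝ)) * e ^ (M + 1) := by
    have hMc : (M : ℝ) = (⌈e * ((H k : ℚ) : ℝ)⌉₊ : ℝ) + M₁ := by
      rw [hM, hn1]; push_cast; ring
    have hceil : e * ((H k : ℚ) : ℝ) ≤ (⌈e * ((H k : ℚ) : ℝ)⌉₊ : ℝ) := Nat.le_ceil _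
    calc ∏ j ∈ Finset.range n, (e + j)
        = (∏ j ∈ Finset.range k, (e + ((j : ℝ) + 1))) * e := by
          rw [hk, Finset.prod_range_succ' (fun j => e + (j : ℝ)) k]
          push_cast
          norm_num
      _ ≤ (∏ j ∈ Finset.range k, (((j : ℝ) + 1) * Real.exp (e / ((j : ℝ) + 1)))) * e := by
          apply mul_le_mul_of_nonneg_right _ (le_of_lt hepos)
          apply Finset.prod_le_prod
          · intro j _; positivity
          · intro j _
            have hj : (0 : ℝ) < (j : ℝ) + 1 := by positivity
            have h1 : e / ((j : ℝ) + 1) + 1 ≤ Real.exp (e / ((j : ℝ) + 1)) :=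
              Real.add_one_le_exp _
            calc e + ((j : ℝ) + 1) = ((j : ℝ) + 1) * (e / ((j : ℝ) + 1) + 1) := by
                  field_simp
              _ ≤ ((j : ℝ) + 1) * Real.exp (e / ((j : ℝ) + 1)) :=
                  mul_le_mul_of_nonneg_left h1 (le_of_lt hj)
      _ = (k.factorial : ℝ) * Real.exp (e * ((H k : ℚ) : ℝ)) * e := by
          rw [Finset.prod_mul_distrib, ← Real.exp_sum]
          congr 2
          · have : ∏ j ∈ Finset.range k, ((j : ℝ) + 1)
                = ((∏ j ∈ Finset.range k, (j + 1) : ℕ) : ℝ) := by push_cast; rfl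
            rw [this, Finset.prod_range_add_one_eq_factorial]
          · congr 1
            rw [hH, Finset.mul_sum]
            exact Finset.sum_congr rfl fun j _ => (mul_one_div e _).symm
      _ ≤ (n.factorial : ℝ) * Real.exp (-(M₁ : ℝ)) * e ^ (M + 1) := by
          rw [he, Real.exp_one_pow, ← Real.exp_one_rpow]
          rw [Real.exp_one_rpow]
          have hfac : (k.factorial : ℝ) ≤ (n.factorial : ℝ) := by
            exact_mod_cast Nat.factorial_le (by omega)
          have hexp : Real.exp (e * ((H k : ℚ) : ℝ)) * Real.exp 1
              ≤ Real.exp (-(M₁ : ℝ)) * Real.exp (M + 1 : ℕ) := by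
            rw [← Real.exp_add, ← Real.exp_add]
            apply Real.exp_le_exp.mpr
            push_cast
            rw [he] at hMc hceil
            linarith
          calc (k.factorial : ℝ) * Real.exp (e * ((H k : ℚ) : ℝ)) * Real.exp 1
              = (k.factorial : ℝ) * (Real.exp (e * ((H k : ℚ) : ℝ)) * Real.exp 1) := by ring
            _ ≤ (n.factorial : ℝ) * (Real.exp (-(M₁ : ℝ)) * Real.exp (M + 1 : ℕ)) := by
                apply mul_le_mul hfac hexp (by positivity) (by positivity)
            _ = (n.factorial : ℝ) * Real.exp (-(M₁ : ℝ)) * Real.exp (M + 1 : ℕ) := by ring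
  have hpow : (0 : ℝ) < e ^ (M + 1) := pow_pos hepos _
  constructor
  · -- Stirling tail
    have hA : ((∑ m ∈ Finset.Icc (M + 1) n, su n m : ℕ) : ℝ) * e ^ (M + 1)
        ≤ ∏ j ∈ Finset.range n, (e + j) := by
      rw [← su_sum e n]
      calc ((∑ m ∈ Finset.Icc (M + 1) n, su n m : ℕ) : ℝ) * e ^ (M + 1)
          = ∑ m ∈ Finset.Icc (M + 1) n, (su n m : ℝ) * e ^ (M + 1) := by
            push_cast
            rw [Finset.sum_mul]
        _ ≤ ∑ m ∈ Finset.Icc (M + 1) n, (su n m : ℝ) * e ^ m := by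
            apply Finset.sum_le_sum
            intro m hm
            exact mul_le_mul_of_nonneg_left
              (pow_le_pow_right₀ he1 (Finset.mem_Icc.mp hm).1) (Nat.cast_nonneg _)
        _ ≤ ∑ m ∈ Finset.range (n + 1), (su n m : ℝ) * e ^ m := by
            apply Finset.sum_le_sum_of_subset_of_nonneg
            · intro m hm
              rw [Finset.mem_range]
              exact Nat.lt_succ_of_le (Finset.mem_Icc.mp hm).2
            · intro m _ _
              positivity
    have := le_trans hA hprod
    exact le_of_mul_le_mul_right this hpow
  · -- permutation tail
    have hcard : (Nat.card {σ : Equiv.Perm (Fin n) //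
        M < (Finset.univ.filter
          (fun i : Fin n => ∀ j : Fin n, j < i → σ i < σ j)).card} : ℕ)
        = (Finset.univ.filter (fun σ : Equiv.Perm (Fin n) => M < lmin σ)).card := by
      rw [Nat.card_eq_fintype_card, Fintype.card_subtype]
      rfl
    rw [hcard]
    have hB : ((Finset.univ.filter (fun σ : Equiv.Perm (Fin n) => M < lmin σ)).card : ℝ)
        * e ^ (M + 1) ≤ ∏ j ∈ Finset.range n, (e + j) := by
      rw [← perm_sum e n]
      calc ((Finset.univ.filter (fun σ : Equiv.Perm (Fin n) => M < lmin σ)).card : ℝ)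
            * e ^ (M + 1)
          = ∑ _σ ∈ Finset.univ.filter (fun σ : Equiv.Perm (Fin n) => M < lmin σ),
              e ^ (M + 1) := by
            rw [Finset.sum_const, nsmul_eq_mul]
        _ ≤ ∑ σ ∈ Finset.univ.filter (fun σ : Equiv.Perm (Fin n) => M < lmin σ),
              e ^ lmin σ := by
            apply Finset.sum_le_sum
            intro σ hσ
            exact pow_le_pow_right₀ he1 (Finset.mem_filter.mp hσ).2
        _ ≤ ∑ σ : Equiv.Perm (Fin n), e ^ lmin σ := by
            apply Finset.sum_le_sum_of_subset_of_nonneg (Finset.filter_subset _ _)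
            intro σ _ _
            positivity
    have := le_trans hB hprod
    exact le_of_mul_le_mul_right this hpow
end
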